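/- arXiv:2501.06495 — 6 statements merged into one kernel-verified Lean document; each statement's English description precedes it below -/
import Mathlib

section
/- Let m̃ : ℕ → (0,∞) be a sequence with m̃(0) = 1 that preserves summability, and let m : ℕ → (0,∞) be a sequence with m(0) = 1 such that for every k > 0 there exist constants A_k, B_k > 0 satisfying |m(n) − m̃(n)| ≤ A_k·B_k^n·(n!)^{−1/k} for every n ∈ ℕ. Then m also preserves summability. -/
open Complex MeasureTheory

noncomputable section

/-- The open sector `S_θ(α) = {ρ e^{iφ} : ρ > 0, |φ - θ| < α/2}`. -/
def Sector (θ α : ℝ) : Set ℂ :=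
  {z : ℂ | ∃ ρ φ : ℝ, 0 < ρ ∧ |φ - θ| < α / 2 ∧
    z = (ρ : ℂ) * Complex.exp ((φ : ℂ) * Complex.I)}

/-- The disc-sector `Ŝ_θ(α, r) = S_θ(α) ∪ D_r`. -/
def DiscSector (θ α r : ℝ) : Set ℂ := Sector θ α ∪ Metric.ball 0 r

/-- `θ ≢ 0 (mod 2π)`. -/
def NonzeroDir (θ : ℝ) : Prop := ¬ ∃ j : ℤ, θ = 2 * Real.pi * (j : ℝ)

/-- The ray `L_θ = {ρ e^{iθ} : ρ > 0}`. -/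
def Ray (θ : ℝ) : Set ℂ :=
  {z : ℂ | ∃ ρ : ℝ, 0 < ρ ∧ z = (ρ : ℂ) * Complex.exp ((θ : ℂ) * Complex.I)}

/-- The half-line `[c, ∞) ⊆ ℂ`. -/
def SlitGe (c : ℝ) : Set ℂ := {z : ℂ | z.im = 0 ∧ c ≤ z.re}

open scoped Classical in
/-- `C(θ) = |sin θ|` if `θ ≡ φ (mod 2π)` for some `φ ∈ (-π/2, π/2) \ {0}`, and `1` otherwise. -/
def Cdir (θ : ℝ) : ℝ :=
  if ∃ φ : ℝ, φ ∈ Set.Ioo (-(Real.pi / 2)) (Real.pi / 2) ∧ φ ≠ 0 ∧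
      ∃ j : ℤ, θ = φ + 2 * Real.pi * (j : ℝ)
  then |Real.sin θ| else 1

/-- A sequence `m : ℕ → (0,∞)` preserves summability: both `Σ tⁿ/m(n)` and `Σ m(n)tⁿ` have
positive radius of convergence, and for every `k > 0` and every direction `θ ≢ 0 (mod 2π)`
their sums extend holomorphically to a disc-sector in direction `θ` with exponential growth
of order at most `k` there. -/
def PreservesSummability (m : ℕ → ℝ) : Prop :=
  (∃ R : ℝ, 0 < R ∧ ∀ t : ℂ, ‖t‖ < R → Summable (fun n : ℕ => t ^ n / (m n : ℂ))) ∧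
  (∃ R : ℝ, 0 < R ∧ ∀ t : ℂ, ‖t‖ < R → Summable (fun n : ℕ => (m n : ℂ) * t ^ n)) ∧
  ∀ k : ℝ, 0 < k → ∀ θ : ℝ, NonzeroDir θ →
    ∃ α : ℝ, 0 < α ∧ ∃ r : ℝ, 0 < r ∧ ∃ U : Set ℂ, IsOpen U ∧ DiscSector θ α r ⊆ U ∧
      ∃ F G : ℂ → ℂ, DifferentiableOn ℂ F U ∧ DifferentiableOn ℂ G U ∧
        (∃ ε : ℝ, 0 < ε ∧ ∀ t : ℂ, ‖t‖ < ε →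
          F t = ∑' n : ℕ, t ^ n / (m n : ℂ) ∧ G t = ∑' n : ℕ, (m n : ℂ) * t ^ n) ∧
        ∃ A B : ℝ, 0 < A ∧ 0 < B ∧ ∀ t ∈ DiscSector θ α r,
          ‖F t‖ ≤ A * Real.exp (B * ‖t‖ ^ k) ∧
          ‖G t‖ ≤ A * Real.exp (B * ‖t‖ ^ k)

/-- A sequence `m : ℕ → (0,∞)` preserves `q`-Gevrey asymptotic expansions: both `Σ tⁿ/m(n)`
and `Σ m(n)tⁿ` have positive radius of convergence and, for every `s > 0` and every direction
`θ ≢ 0 (mod 2π)`, their sums extend holomorphically to an infinite sector in direction `θ`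
with `q`-exponential growth of order `1/s` there. -/
def PreservesQGevrey (q : ℝ) (m : ℕ → ℝ) : Prop :=
  (∃ R : ℝ, 0 < R ∧ ∀ t : ℂ, ‖t‖ < R → Summable (fun n : ℕ => t ^ n / (m n : ℂ))) ∧
  (∃ R : ℝ, 0 < R ∧ ∀ t : ℂ, ‖t‖ < R → Summable (fun n : ℕ => (m n : ℂ) * t ^ n)) ∧
  ∀ s : ℝ, 0 < s → ∀ θ : ℝ, NonzeroDir θ →
    ∃ α : ℝ, 0 < α ∧ ∃ U : Set ℂ, IsOpen U ∧ Sector θ α ⊆ U ∧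
      ∃ F G : ℂ → ℂ, DifferentiableOn ℂ F U ∧ DifferentiableOn ℂ G U ∧
        (∃ ε : ℝ, 0 < ε ∧ Metric.ball 0 ε ⊆ U ∧ ∀ t : ℂ, ‖t‖ < ε →
          F t = ∑' n : ℕ, t ^ n / (m n : ℂ) ∧ G t = ∑' n : ℕ, (m n : ℂ) * t ^ n) ∧
        ∃ C h : ℝ, 0 < C ∧ 0 < h ∧ ∃ β : ℝ, ∀ t ∈ Sector θ α,
          ‖F t‖ ≤
            C * Real.exp ((Real.log (‖t‖ + h)) ^ 2 / (2 * s * Real.log q)) * (‖t‖ + h) ^ β ∧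
          ‖G t‖ ≤
            C * Real.exp ((Real.log (‖t‖ + h)) ^ 2 / (2 * s * Real.log q)) * (‖t‖ + h) ^ β

/-- The analytic continuation of the Hurwitz–Lerch transcendent given by the integral
representation `Φ(t,s,a) = Γ(s)⁻¹ ∫₀^∞ ζ^{s-1} e^{-aζ}/(1 - t e^{-ζ}) dζ`. -/
def lerchF (a s : ℂ) (t : ℂ) : ℂ :=
  (Complex.Gamma s)⁻¹ *
    ∫ ζ in Set.Ioi (0 : ℝ),
      (ζ : ℂ) ^ (s - 1) * Complex.exp (-a * (ζ : ℂ)) / (1 - t * Complex.exp (-(ζ : ℂ)))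

/-! ### Auxiliary lemmas for STATEMENT 0 -/

/-- Key elementary estimate: `x^n (n!)^{-s} ≤ exp (s x^{1/s})` for `s > 0`, `x ≥ 0`. -/
lemma aux_pow_factorial_le (s x : ℝ) (hs : 0 < s) (hx : 0 ≤ x) (n : ℕ) :
    x ^ n * (n.factorial : ℝ) ^ (-s) ≤ Real.exp (s * x ^ (1 / s)) := by
  set u : ℝ := x ^ (1 / s) with hu
  have hu0 : 0 ≤ u := Real.rpow_nonneg hx _
  have hfac : (0 : ℝ) < (n.factorial : ℝ) := by exact_mod_cast n.factorial_pos
  have h1 : u ^ n ≤ (n.factorial : ℝ) * Real.exp u := by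
    have h := Real.pow_div_factorial_le_exp u hu0 n
    rw [div_le_iff₀ hfac] at h
    linarith
  have hxn : (u ^ n) ^ s = x ^ n := by
    rw [← Real.rpow_natCast u n, ← Real.rpow_natCast x n, ← Real.rpow_mul hu0, hu,
      ← Real.rpow_mul hx]
    congr 1
    field_simp
  have h2 : (u ^ n) ^ s ≤ ((n.factorial : ℝ) * Real.exp u) ^ s :=
    Real.rpow_le_rpow (by positivity) h1 hs.le
  have h3 : ((n.factorial : ℝ) * Real.exp u) ^ s
      = (n.factorial : ℝ) ^ s * Real.exp (s * u) := by
    rw [Real.mul_rpow hfac.le (Real.exp_pos u).le, mul_comm s u, Real.exp_mul]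
  have hpow : (0 : ℝ) < (n.factorial : ℝ) ^ s := Real.rpow_pos_of_pos hfac s
  have hkey : x ^ n ≤ (n.factorial : ℝ) ^ s * Real.exp (s * u) := by
    rw [← hxn]; rw [h3] at h2; exact h2
  rw [Real.rpow_neg hfac.le, ← div_eq_mul_inv, div_le_iff₀ hpow]
  calc x ^ n ≤ (n.factorial : ℝ) ^ s * Real.exp (s * u) := hkey
    _ = Real.exp (s * u) * (n.factorial : ℝ) ^ s := by ring

/-- Package: a power series with coefficients bounded by `A B^n (n!)^{-1/k}` is entire and
of exponential growth of order `k`. -/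
lemma gevrey_series_props {c : ℕ → ℂ} {k A B : ℝ} (hk : 0 < k) (hA : 0 < A) (hB : 0 < B)
    (hc : ∀ n, ‖c n‖ ≤ A * B ^ n * (n.factorial : ℝ) ^ (-(1 / k))) :
    (∀ t : ℂ, Summable (fun n => c n * t ^ n)) ∧
    Differentiable ℂ (fun t : ℂ => ∑' n, c n * t ^ n) ∧
    ∀ t : ℂ, ‖∑' n, c n * t ^ n‖ ≤
      (2 * A) * Real.exp (((1 / k) * (2 * B) ^ k) * ‖t‖ ^ k) := by
  have hs : (0 : ℝ) < 1 / k := by positivity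
  -- the central term bound
  have hb : ∀ x : ℝ, 0 ≤ x → ∀ n : ℕ,
      A * B ^ n * (n.factorial : ℝ) ^ (-(1 / k)) * x ^ n ≤
        (A * Real.exp (((1 / k) * (2 * B) ^ k) * x ^ k)) * (1 / 2) ^ n := by
    intro x hx n
    have haux := aux_pow_factorial_le (1 / k) (2 * B * x) hs (by positivity) n
    have hinv : (1 : ℝ) / (1 / k) = k := one_div_one_div k
    rw [hinv] at haux
    have hmr : (2 * B * x) ^ k = (2 * B) ^ k * x ^ k :=
      Real.mul_rpow (by positivity) hx
    have hBx : B ^ n * x ^ n = ((2 * B * x) ^ n) * (1 / 2 : ℝ) ^ n := by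
      rw [← mul_pow, ← mul_pow]; congr 1; ring
    calc A * B ^ n * (n.factorial : ℝ) ^ (-(1 / k)) * x ^ n
        = A * (((2 * B * x) ^ n * (n.factorial : ℝ) ^ (-(1 / k))) * (1 / 2 : ℝ) ^ n) := by
          have hBx' : A * B ^ n * (n.factorial : ℝ) ^ (-(1 / k)) * x ^ n
              = A * (B ^ n * x ^ n) * (n.factorial : ℝ) ^ (-(1 / k)) := by ring
          rw [hBx', hBx]; ring
      _ ≤ A * (Real.exp ((1 / k) * (2 * B * x) ^ k) * (1 / 2 : ℝ) ^ n) := by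
          have h2 : (0 : ℝ) ≤ (1 / 2 : ℝ) ^ n := by positivity
          exact mul_le_mul_of_nonneg_left (mul_le_mul_of_nonneg_right haux h2) hA.le
      _ = (A * Real.exp (((1 / k) * (2 * B) ^ k) * x ^ k)) * (1 / 2) ^ n := by
          rw [hmr]; ring_nf
  have hterm : ∀ (t : ℂ) (n : ℕ), ‖c n * t ^ n‖ ≤
      (A * Real.exp (((1 / k) * (2 * B) ^ k) * ‖t‖ ^ k)) * (1 / 2 : ℝ) ^ n := by
    intro t n
    have h1 : ‖c n * t ^ n‖ = ‖c n‖ * ‖t‖ ^ n := by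
      rw [norm_mul, norm_pow]
    rw [h1]
    calc ‖c n‖ * ‖t‖ ^ n ≤ A * B ^ n * (n.factorial : ℝ) ^ (-(1 / k)) * ‖t‖ ^ n :=
          mul_le_mul_of_nonneg_right (hc n) (by positivity)
      _ ≤ _ := hb ‖t‖ (norm_nonneg t) n
  have hgeo : ∀ C : ℝ, Summable (fun n : ℕ => C * (1 / 2 : ℝ) ^ n) := fun C =>
    summable_geometric_two.mul_left C
  have hsum : ∀ t : ℂ, Summable (fun n => c n * t ^ n) := fun t =>
    Summable.of_norm_bounded (hgeo _) (hterm t)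
  have hnormsum : ∀ t : ℂ, Summable (fun n => ‖c n * t ^ n‖) := fun t =>
    Summable.of_nonneg_of_le (fun n => norm_nonneg _) (hterm t) (hgeo _)
  refine ⟨hsum, ?_, ?_⟩
  · -- entirety via `ofScalars`
    set p := FormalMultilinearSeries.ofScalars ℂ c with hp
    have hrad : p.radius = ⊤ := by
      apply p.radius_eq_top_of_summable_norm
      intro r
      have : ∀ n : ℕ, ‖p n‖ * (r : ℝ) ^ n = ‖c n * (((r : ℝ) : ℂ)) ^ n‖ := by
        intro n
        rw [hp, FormalMultilinearSeries.ofScalars_norm, norm_mul, norm_pow,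
          Complex.norm_real, Real.norm_eq_abs, _root_.abs_of_nonneg r.coe_nonneg]
      simpa only [this] using hnormsum (((r : ℝ) : ℂ))
    have hball : HasFPowerSeriesOnBall p.sum p 0 p.radius :=
      p.hasFPowerSeriesOnBall (by rw [hrad]; exact ENNReal.coe_lt_top.trans_le le_rfl)
    have hdiff : DifferentiableOn ℂ p.sum (EMetric.ball 0 p.radius) :=
      hball.differentiableOn
    have heq : (fun t : ℂ => ∑' n, c n * t ^ n) = p.sum := by
      funext t
      exact tsum_congr fun n => by
        rw [hp, FormalMultilinearSeries.ofScalars_apply_eq, smul_eq_mul]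
    rw [heq]
    intro t
    have hmem : t ∈ EMetric.ball (0 : ℂ) p.radius := by
      rw [hrad]; exact EMetric.mem_ball.2 (edist_lt_top t 0)
    exact hdiff.differentiableAt (EMetric.isOpen_ball.mem_nhds hmem)
  · intro t
    calc ‖∑' n, c n * t ^ n‖ ≤ ∑' n, ‖c n * t ^ n‖ := norm_tsum_le_tsum_norm (hnormsum t)
      _ ≤ ∑' n : ℕ, (A * Real.exp (((1 / k) * (2 * B) ^ k) * ‖t‖ ^ k)) * (1 / 2 : ℝ) ^ n :=
          Summable.tsum_le_tsum (hterm t) (hnormsum t) (hgeo _)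
      _ = (A * Real.exp (((1 / k) * (2 * B) ^ k) * ‖t‖ ^ k)) * 2 := by
          rw [tsum_mul_left, tsum_geometric_two]
      _ = (2 * A) * Real.exp (((1 / k) * (2 * B) ^ k) * ‖t‖ ^ k) := by ring

/-- A summable sequence in `ℂ` is bounded in norm by a positive constant. -/
lemma aux_bound_of_summable {g : ℕ → ℂ} (hs : Summable g) :
    ∃ C : ℝ, 0 < C ∧ ∀ n, ‖g n‖ ≤ C := by
  have h0 : Filter.Tendsto (fun n => ‖g n‖) Filter.atTop (nhds 0) := by
    simpa using hs.tendsto_atTop_zero.norm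
  obtain ⟨C, hC⟩ := h0.bddAbove_range
  exact ⟨max C 1, lt_of_lt_of_le one_pos (le_max_right _ _),
    fun n => le_trans (hC (Set.mem_range_self n)) (le_max_left _ _)⟩

/-- If `m̃` preserves summability and `m` is close to `m̃` in the sense that
for every `k > 0` one has `|m(n) - m̃(n)| ≤ A_k B_k^n (n!)^{-1/k}`, then `m` also preserves
summability. -/
theorem close_to_summability_preserving_preserves_summability
    (mt m : ℕ → ℝ) (hmt_pos : ∀ n, 0 < mt n) (hmt0 : mt 0 = 1)
    (hm_pos : ∀ n, 0 < m n) (hm0 : m 0 = 1)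
    (hmt : PreservesSummability mt)
    (hclose : ∀ k : ℝ, 0 < k → ∃ A : ℝ, 0 < A ∧ ∃ B : ℝ, 0 < B ∧ ∀ n : ℕ,
      |m n - mt n| ≤ A * B ^ n * (n.factorial : ℝ) ^ (-(1 / k))) :
    PreservesSummability m := by
  obtain ⟨⟨R₁, hR₁, hsum₁⟩, ⟨R₂, hR₂, hsum₂⟩, hext⟩ := hmt
  -- lower geometric bound for `mt`
  have hmin₁ : 0 < min R₁ 1 := lt_min hR₁ one_pos
  obtain ⟨q, hq0, hq1, hqR⟩ : ∃ q : ℝ, 0 < q ∧ q ≤ 1 ∧ q < R₁ := by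
    refine ⟨min R₁ 1 / 2, by linarith, ?_, ?_⟩
    · have := min_le_right R₁ 1; linarith
    · have := min_le_left R₁ 1; linarith
  have hsq : Summable (fun n : ℕ => ((q : ℂ)) ^ n / ((mt n : ℝ) : ℂ)) := by
    apply hsum₁
    rw [Complex.norm_real, Real.norm_eq_abs, abs_of_pos hq0]; exact hqR
  obtain ⟨C₁, hC₁, hC₁b⟩ := aux_bound_of_summable hsq
  have hmtlow : ∀ n, q ^ n / C₁ ≤ mt n := by
    intro n
    have h := hC₁b n
    rw [norm_div, norm_pow, Complex.norm_real, Complex.norm_real, Real.norm_eq_abs,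
      Real.norm_eq_abs, abs_of_pos hq0, abs_of_pos (hmt_pos n), div_le_iff₀ (hmt_pos n)] at h
    rw [div_le_iff₀ hC₁]
    nlinarith
  -- upper geometric bound for `mt`
  have hmin₂ : 0 < min R₂ 1 := lt_min hR₂ one_pos
  obtain ⟨q₂, hq₂0, hq₂R⟩ : ∃ q₂ : ℝ, 0 < q₂ ∧ q₂ < R₂ := by
    refine ⟨min R₂ 1 / 2, by linarith, ?_⟩
    have := min_le_left R₂ 1; linarith
  have hsq₂ : Summable (fun n : ℕ => ((mt n : ℝ) : ℂ) * ((q₂ : ℂ)) ^ n) := by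
    apply hsum₂
    rw [Complex.norm_real, Real.norm_eq_abs, abs_of_pos hq₂0]; exact hq₂R
  obtain ⟨C₂, hC₂, hC₂b⟩ := aux_bound_of_summable hsq₂
  have hmtup : ∀ n, mt n ≤ C₂ * (q₂⁻¹) ^ n := by
    intro n
    have h := hC₂b n
    rw [norm_mul, norm_pow, Complex.norm_real, Complex.norm_real, Real.norm_eq_abs,
      Real.norm_eq_abs, abs_of_pos (hmt_pos n), abs_of_pos hq₂0] at h
    have hqn : (0 : ℝ) < q₂ ^ n := pow_pos hq₂0 n
    rw [inv_pow, ← div_eq_mul_inv, le_div_iff₀ hqn]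
    linarith
  -- `k = 1` closeness bound
  obtain ⟨A₀, hA₀, B₀, hB₀, hd₀⟩ := hclose 1 one_pos
  have hd : ∀ n, |m n - mt n| ≤ A₀ * B₀ ^ n * ((n.factorial : ℝ))⁻¹ := by
    intro n
    have h := hd₀ n
    rwa [show -((1 : ℝ) / 1) = (-1 : ℝ) by norm_num, Real.rpow_neg_one] at h
  -- eventual lower bound for `m`
  have htend : Filter.Tendsto (fun n : ℕ => A₀ * ((B₀ / q) ^ n / (n.factorial : ℝ)))
      Filter.atTop (nhds 0) := by
    have h := FloorSemiring.tendsto_pow_div_factorial_atTop (K := ℝ) (B₀ / q)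
    simpa using h.const_mul A₀
  have hev : ∀ᶠ n in Filter.atTop,
      A₀ * ((B₀ / q) ^ n / (n.factorial : ℝ)) < 1 / (2 * C₁) :=
    htend.eventually_lt_const (by positivity)
  obtain ⟨N, hN⟩ := Filter.eventually_atTop.mp hev
  have hmlowN : ∀ n, N ≤ n → 1 / (2 * C₁) * q ^ n ≤ m n := by
    intro n hn
    have h1 := hN n hn
    have hqn : (0 : ℝ) < q ^ n := pow_pos hq0 n
    have hfn : (0 : ℝ) < (n.factorial : ℝ) := by exact_mod_cast n.factorial_pos
    have h2 : A₀ * B₀ ^ n * ((n.factorial : ℝ))⁻¹ ≤ 1 / (2 * C₁) * q ^ n := by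
      have h3 := mul_le_mul_of_nonneg_right h1.le hqn.le
      calc A₀ * B₀ ^ n * ((n.factorial : ℝ))⁻¹
          = A₀ * ((B₀ / q) ^ n / (n.factorial : ℝ)) * q ^ n := by
            rw [div_pow]; field_simp
        _ ≤ 1 / (2 * C₁) * q ^ n := h3
    have h4 := hmtlow n
    have h5 : -(|m n - mt n|) ≤ m n - mt n := neg_abs_le _
    have hid : q ^ n / C₁ - 1 / (2 * C₁) * q ^ n = 1 / (2 * C₁) * q ^ n := by
      field_simp; ring
    have hdn := hd n
    linarith
  -- uniform lower bound for `m` and `mt`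
  obtain ⟨cl, hcl0, hmlow, hmtlow'⟩ :
      ∃ cl : ℝ, 0 < cl ∧ (∀ n, cl * q ^ n ≤ m n) ∧ (∀ n, cl * q ^ n ≤ mt n) := by
    have hrangene : (Finset.range (N + 1)).Nonempty :=
      Finset.nonempty_range_iff.mpr (Nat.succ_ne_zero N)
    set δ : ℝ := (Finset.range (N + 1)).inf' hrangene m with hδdef
    have hδpos : 0 < δ := by
      rw [hδdef, Finset.lt_inf'_iff]
      exact fun n _ => hm_pos n
    refine ⟨min δ (1 / (2 * C₁)), lt_min hδpos (by positivity), fun n => ?_, fun n => ?_⟩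
    · rcases le_or_gt N n with h | h
      · calc min δ (1 / (2 * C₁)) * q ^ n ≤ 1 / (2 * C₁) * q ^ n :=
            mul_le_mul_of_nonneg_right (min_le_right _ _) (pow_nonneg hq0.le n)
          _ ≤ m n := hmlowN n h
      · have hn1 : n ∈ Finset.range (N + 1) := Finset.mem_range.mpr (by omega)
        have hδle : δ ≤ m n := Finset.inf'_le m hn1
        have hq' : q ^ n ≤ 1 := pow_le_one₀ hq0.le hq1
        calc min δ (1 / (2 * C₁)) * q ^ n ≤ δ * 1 :=
            mul_le_mul (min_le_left _ _) hq' (pow_nonneg hq0.le n) hδpos.le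
          _ = δ := mul_one δ
          _ ≤ m n := hδle
    · have h1 : min δ (1 / (2 * C₁)) ≤ 1 / C₁ := le_trans (min_le_right _ _)
        (by apply one_div_le_one_div_of_le hC₁; linarith)
      calc min δ (1 / (2 * C₁)) * q ^ n ≤ 1 / C₁ * q ^ n :=
          mul_le_mul_of_nonneg_right h1 (pow_nonneg hq0.le n)
        _ = q ^ n / C₁ := by ring
        _ ≤ mt n := hmtlow n
  -- uniform upper bound for `m`
  obtain ⟨Mu, hMu0, hMuq, hMuB⟩ : ∃ Mu : ℝ, 0 < Mu ∧ q₂⁻¹ ≤ Mu ∧ B₀ ≤ Mu :=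
    ⟨max q₂⁻¹ B₀, lt_of_lt_of_le hB₀ (le_max_right _ _), le_max_left _ _, le_max_right _ _⟩
  have hmup : ∀ n, m n ≤ (C₂ + A₀) * Mu ^ n := by
    intro n
    have h1 : m n - mt n ≤ |m n - mt n| := le_abs_self _
    have hfn : (1 : ℝ) ≤ (n.factorial : ℝ) := by exact_mod_cast n.factorial_pos
    have h2 : |m n - mt n| ≤ A₀ * B₀ ^ n := by
      calc |m n - mt n| ≤ A₀ * B₀ ^ n * ((n.factorial : ℝ))⁻¹ := hd n
        _ ≤ A₀ * B₀ ^ n * 1 := by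
            apply mul_le_mul_of_nonneg_left _ (by positivity)
            exact inv_le_one_of_one_le₀ hfn
        _ = A₀ * B₀ ^ n := mul_one _
    have h3 : mt n ≤ C₂ * Mu ^ n := le_trans (hmtup n)
      (mul_le_mul_of_nonneg_left
        (pow_le_pow_left₀ (by positivity) hMuq n) hC₂.le)
    have h4 : A₀ * B₀ ^ n ≤ A₀ * Mu ^ n :=
      mul_le_mul_of_nonneg_left (pow_le_pow_left₀ hB₀.le hMuB n) hA₀.le
    nlinarith
  constructor
  · -- positive radius for `Σ tⁿ/m(n)`
    refine ⟨q, hq0, fun t ht => ?_⟩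
    apply Summable.of_norm_bounded (g := fun n : ℕ => 1 / cl * (‖t‖ / q) ^ n)
    · exact (summable_geometric_of_lt_one (by positivity)
        (by rw [div_lt_one hq0]; exact ht)).mul_left _
    · intro n
      rw [norm_div, norm_pow, Complex.norm_real, Real.norm_eq_abs, abs_of_pos (hm_pos n)]
      have h1 : cl * q ^ n ≤ m n := hmlow n
      have h2 : ‖t‖ ^ n / m n ≤ ‖t‖ ^ n / (cl * q ^ n) :=
        div_le_div_of_nonneg_left (by positivity) (by positivity) h1
      calc ‖t‖ ^ n / m n ≤ ‖t‖ ^ n / (cl * q ^ n) := h2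
        _ = 1 / cl * (‖t‖ / q) ^ n := by
            rw [div_pow]; field_simp
  refine ⟨⟨Mu⁻¹, by positivity, fun t ht => ?_⟩, ?_⟩
  · -- positive radius for `Σ m(n)tⁿ`
    apply Summable.of_norm_bounded (g := fun n : ℕ => (C₂ + A₀) * (Mu * ‖t‖) ^ n)
    · refine (summable_geometric_of_lt_one (by positivity) ?_).mul_left _
      rw [← one_div, lt_div_iff₀ hMu0] at ht; linarith
    · intro n
      rw [norm_mul, norm_pow, Complex.norm_real, Real.norm_eq_abs, abs_of_pos (hm_pos n)]
      calc m n * ‖t‖ ^ n ≤ (C₂ + A₀) * Mu ^ n * ‖t‖ ^ n :=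
          mul_le_mul_of_nonneg_right (hmup n) (by positivity)
        _ = (C₂ + A₀) * (Mu * ‖t‖) ^ n := by rw [mul_pow]; ring
  -- the extension property
  intro k hk θ hθ
  obtain ⟨α, hα, r, hr, U, hU, hUsub, Ft, Gt, hFtdiff, hGtdiff,
    ⟨ε, hε, hεeq⟩, A, B, hA, hB, hbound⟩ := hext k hk θ hθ
  obtain ⟨Ak, hAk, Bk, hBk, hdk⟩ := hclose k hk
  -- coefficients of the correcting entire series
  set cG : ℕ → ℂ := fun n => ((m n - mt n : ℝ) : ℂ) with hcGdef
  set cF : ℕ → ℂ := fun n => ((1 / m n - 1 / mt n : ℝ) : ℂ) with hcFdef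
  have hcGb : ∀ n, ‖cG n‖ ≤ Ak * Bk ^ n * (n.factorial : ℝ) ^ (-(1 / k)) := by
    intro n
    rw [hcGdef, Complex.norm_real, Real.norm_eq_abs]
    exact hdk n
  have hcFb : ∀ n, ‖cF n‖ ≤
      Ak / (cl * cl) * (Bk / (q * q)) ^ n * (n.factorial : ℝ) ^ (-(1 / k)) := by
    intro n
    rw [hcFdef, Complex.norm_real, Real.norm_eq_abs]
    have hmn := hm_pos n
    have hmtn := hmt_pos n
    have habs : |1 / m n - 1 / mt n| = |m n - mt n| / (m n * mt n) := by
      rw [div_sub_div _ _ hmn.ne' hmtn.ne', abs_div, abs_of_pos (mul_pos hmn hmtn),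
        one_mul, mul_one, abs_sub_comm]
    have hprod : cl * q ^ n * (cl * q ^ n) ≤ m n * mt n :=
      mul_le_mul (hmlow n) (hmtlow' n) (by positivity) hmn.le
    rw [habs]
    calc |m n - mt n| / (m n * mt n)
        ≤ (Ak * Bk ^ n * (n.factorial : ℝ) ^ (-(1 / k))) / (cl * q ^ n * (cl * q ^ n)) := by
          apply div_le_div₀ (by positivity) (hdk n) (by positivity) hprod
      _ = Ak / (cl * cl) * (Bk / (q * q)) ^ n * (n.factorial : ℝ) ^ (-(1 / k)) := by
          rw [div_pow, mul_pow]
          field_simp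
  obtain ⟨sumF, diffF, bndF⟩ := gevrey_series_props hk
    (by positivity : (0:ℝ) < Ak / (cl * cl)) (by positivity : (0:ℝ) < Bk / (q * q)) hcFb
  obtain ⟨sumG, diffG, bndG⟩ := gevrey_series_props hk hAk hBk hcGb
  refine ⟨α, hα, r, hr, U, hU, hUsub,
    (fun t => Ft t + ∑' n, cF n * t ^ n), (fun t => Gt t + ∑' n, cG n * t ^ n),
    hFtdiff.add diffF.differentiableOn, hGtdiff.add diffG.differentiableOn, ?_, ?_⟩
  · -- agreement with the power series near 0
    refine ⟨min ε (min R₁ R₂), by positivity, fun t ht => ?_⟩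
    have htε : ‖t‖ < ε := lt_of_lt_of_le ht (min_le_left _ _)
    have ht1 : ‖t‖ < R₁ :=
      lt_of_lt_of_le ht (le_trans (min_le_right _ _) (min_le_left _ _))
    have ht2 : ‖t‖ < R₂ :=
      lt_of_lt_of_le ht (le_trans (min_le_right _ _) (min_le_right _ _))
    obtain ⟨hFeq, hGeq⟩ := hεeq t htε
    constructor
    · show Ft t + (∑' n, cF n * t ^ n) = ∑' n : ℕ, t ^ n / ((m n : ℝ) : ℂ)
      rw [hFeq, ← Summable.tsum_add (hsum₁ t ht1) (sumF t)]
      apply tsum_congr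
      intro n
      have hmn : ((m n : ℝ) : ℂ) ≠ 0 := Complex.ofReal_ne_zero.mpr (hm_pos n).ne'
      have hmtn : ((mt n : ℝ) : ℂ) ≠ 0 := Complex.ofReal_ne_zero.mpr (hmt_pos n).ne'
      simp only [hcFdef]
      push_cast
      field_simp
      ring
    · show Gt t + (∑' n, cG n * t ^ n) = ∑' n : ℕ, ((m n : ℝ) : ℂ) * t ^ n
      rw [hGeq, ← Summable.tsum_add (hsum₂ t ht2) (sumG t)]
      apply tsum_congr
      intro n
      simp only [hcGdef]
      push_cast
      ring
  · -- the exponential bounds on the disc-sector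
    obtain ⟨BB, hBB0, hBBB, hBBF, hBBG⟩ : ∃ BB : ℝ, 0 < BB ∧ B ≤ BB ∧
        1 / k * (2 * (Bk / (q * q))) ^ k ≤ BB ∧ 1 / k * (2 * Bk) ^ k ≤ BB := by
      refine ⟨max B (max (1 / k * (2 * (Bk / (q * q))) ^ k) (1 / k * (2 * Bk) ^ k)),
        lt_of_lt_of_le hB (le_max_left _ _), le_max_left _ _, ?_, ?_⟩
      · exact le_trans (le_max_left _ _) (le_max_right _ _)
      · exact le_trans (le_max_right _ _) (le_max_right _ _)
    refine ⟨A + 2 * (Ak / (cl * cl)) + 2 * Ak, BB, by positivity, hBB0, fun t htin => ?_⟩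
    obtain ⟨hFb, hGb⟩ := hbound t htin
    have hx : (0 : ℝ) ≤ ‖t‖ ^ k := Real.rpow_nonneg (norm_nonneg t) k
    have hexpmono : ∀ b : ℝ, b ≤ BB →
        Real.exp (b * ‖t‖ ^ k) ≤ Real.exp (BB * ‖t‖ ^ k) := fun b hb =>
      Real.exp_le_exp.mpr (mul_le_mul_of_nonneg_right hb hx)
    have hexppos : 0 < Real.exp (BB * ‖t‖ ^ k) := Real.exp_pos _
    constructor
    · have h1 : ‖Ft t + ∑' n, cF n * t ^ n‖ ≤
          ‖Ft t‖ + ‖∑' n, cF n * t ^ n‖ := norm_add_le _ _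
      have h2 : ‖∑' n, cF n * t ^ n‖ ≤
          2 * (Ak / (cl * cl)) * Real.exp ((1 / k * (2 * (Bk / (q * q))) ^ k) * ‖t‖ ^ k) := by
        exact bndF t
      have h3 : Real.exp (B * ‖t‖ ^ k) ≤ Real.exp (BB * ‖t‖ ^ k) := hexpmono B hBBB
      have h4 : Real.exp ((1 / k * (2 * (Bk / (q * q))) ^ k) * ‖t‖ ^ k)
          ≤ Real.exp (BB * ‖t‖ ^ k) := hexpmono _ hBBF
      have hAkcl : (0:ℝ) < Ak / (cl * cl) := by positivity
      calc ‖Ft t + ∑' n, cF n * t ^ n‖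
          ≤ ‖Ft t‖ + ‖∑' n, cF n * t ^ n‖ := h1
        _ ≤ A * Real.exp (B * ‖t‖ ^ k) + 2 * (Ak / (cl * cl)) *
              Real.exp ((1 / k * (2 * (Bk / (q * q))) ^ k) * ‖t‖ ^ k) := add_le_add hFb h2
        _ ≤ A * Real.exp (BB * ‖t‖ ^ k) + 2 * (Ak / (cl * cl)) * Real.exp (BB * ‖t‖ ^ k) := by
            apply add_le_add
            · exact mul_le_mul_of_nonneg_left h3 hA.le
            · exact mul_le_mul_of_nonneg_left h4 (by positivity)
        _ ≤ (A + 2 * (Ak / (cl * cl)) + 2 * Ak) * Real.exp (BB * ‖t‖ ^ k) := by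
            have hexpand : (A + 2 * (Ak / (cl * cl)) + 2 * Ak) * Real.exp (BB * ‖t‖ ^ k)
                = A * Real.exp (BB * ‖t‖ ^ k) + 2 * (Ak / (cl * cl)) * Real.exp (BB * ‖t‖ ^ k)
                  + 2 * Ak * Real.exp (BB * ‖t‖ ^ k) := by ring
            have h6 : (0:ℝ) ≤ 2 * Ak * Real.exp (BB * ‖t‖ ^ k) := by positivity
            linarith
    · have h1 : ‖Gt t + ∑' n, cG n * t ^ n‖ ≤
          ‖Gt t‖ + ‖∑' n, cG n * t ^ n‖ := norm_add_le _ _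
      have h2 : ‖∑' n, cG n * t ^ n‖ ≤
          2 * Ak * Real.exp ((1 / k * (2 * Bk) ^ k) * ‖t‖ ^ k) := by
        exact bndG t
      have h3 : Real.exp (B * ‖t‖ ^ k) ≤ Real.exp (BB * ‖t‖ ^ k) := hexpmono B hBBB
      have h4 : Real.exp ((1 / k * (2 * Bk) ^ k) * ‖t‖ ^ k)
          ≤ Real.exp (BB * ‖t‖ ^ k) := hexpmono _ hBBG
      calc ‖Gt t + ∑' n, cG n * t ^ n‖
          ≤ ‖Gt t‖ + ‖∑' n, cG n * t ^ n‖ := h1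
        _ ≤ A * Real.exp (B * ‖t‖ ^ k) + 2 * Ak *
              Real.exp ((1 / k * (2 * Bk) ^ k) * ‖t‖ ^ k) := add_le_add hGb h2
        _ ≤ A * Real.exp (BB * ‖t‖ ^ k) + 2 * Ak * Real.exp (BB * ‖t‖ ^ k) := by
            apply add_le_add
            · exact mul_le_mul_of_nonneg_left h3 hA.le
            · exact mul_le_mul_of_nonneg_left h4 (by positivity)
        _ ≤ (A + 2 * (Ak / (cl * cl)) + 2 * Ak) * Real.exp (BB * ‖t‖ ^ k) := by
            have hexpand : (A + 2 * (Ak / (cl * cl)) + 2 * Ak) * Real.exp (BB * ‖t‖ ^ k)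
                = A * Real.exp (BB * ‖t‖ ^ k) + 2 * (Ak / (cl * cl)) * Real.exp (BB * ‖t‖ ^ k)
                  + 2 * Ak * Real.exp (BB * ‖t‖ ^ k) := by ring
            have h6 : (0:ℝ) ≤ 2 * (Ak / (cl * cl)) * Real.exp (BB * ‖t‖ ^ k) := by positivity
            linarith
end
end

section
/- Let m̃ : ℕ → (0,∞) be a sequence with m̃(0) = 1 that preserves summability, and let m : ℕ → (0,∞) be a sequence with m(0) = 1. Set r(n) = m(n) − m̃(n) for n ∈ ℕ. Suppose there exists k > 0 such that: (i) there exist B, C > 0 with |r(n)| ≤ B·Cⁿ·(n!)^{−1/k} for all n ∈ ℕ; and (ii) there exists k' > 0 such that there are NO constants B', C' > 0 with |r(n)| ≤ B'·(C')ⁿ·(n!)^{−1/k'} for all n ∈ ℕ. Then the sequence m does not preserve summability. -/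
open Complex MeasureTheory

noncomputable section

set_option maxHeartbeats 2000000











lemma mem_sector_of_arg {θ α : ℝ} {t : ℂ} (ht : t ≠ 0) (h : |t.arg - θ| < α / 2) :
    t ∈ Sector θ α :=
  ⟨‖t‖, t.arg, norm_pos_iff.mpr ht, h, (Complex.norm_mul_exp_arg_mul_I t).symm⟩

lemma sector_eq_image (θ α : ℝ) :
    Sector θ α = (fun p : ℝ × ℝ => (p.1 : ℂ) * Complex.exp ((p.2 : ℂ) * Complex.I)) ''
      (Set.Ioi 0 ×ˢ Set.Ioo (θ - α / 2) (θ + α / 2)) := by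
  ext z
  constructor
  · rintro ⟨ρ, φ, hρ, hφ, rfl⟩
    refine ⟨(ρ, φ), ⟨hρ, ?_, ?_⟩, rfl⟩
    · linarith [(abs_lt.1 hφ).1]
    · linarith [(abs_lt.1 hφ).2]
  · rintro ⟨⟨ρ, φ⟩, ⟨hρ, hφ1, hφ2⟩, rfl⟩
    exact ⟨ρ, φ, hρ, abs_lt.2 ⟨by linarith, by linarith⟩, rfl⟩

lemma isConnected_sector {θ α : ℝ} (hα : 0 < α) : IsConnected (Sector θ α) := by
  rw [sector_eq_image]
  apply IsConnected.image
  · exact isConnected_Ioi.prod ⟨⟨θ, by constructor <;> linarith⟩, isPreconnected_Ioo⟩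
  · fun_prop

lemma mem_sector_self {θ α ρ : ℝ} (hα : 0 < α) (hρ : 0 < ρ) :
    (ρ : ℂ) * Complex.exp ((θ : ℂ) * Complex.I) ∈ Sector θ α :=
  ⟨ρ, θ, hρ, by simpa using by positivity, rfl⟩

lemma isConnected_discSector {θ α r : ℝ} (hα : 0 < α) (hr : 0 < r) :
    IsConnected (DiscSector θ α r) := by
  apply IsConnected.union _ (isConnected_sector hα)
    ((convex_ball (0:ℂ) r).isConnected (Metric.nonempty_ball.2 hr))
  refine ⟨(r/2 : ℝ) * Complex.exp ((θ : ℂ) * Complex.I), mem_sector_self hα (by linarith), ?_⟩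
  simp only [Metric.mem_ball, dist_zero_right, norm_mul, Complex.norm_real]
  have : ‖Complex.exp ((θ:ℂ) * Complex.I)‖ = 1 := by simp [Complex.norm_exp]
  rw [this]
  rw [Real.norm_eq_abs, abs_of_pos (by linarith)]
  linarith

lemma sector_mono {θ α α' : ℝ} (h : α ≤ α') : Sector θ α ⊆ Sector θ α' := by
  rintro z ⟨ρ, φ, hρ, hφ, rfl⟩
  exact ⟨ρ, φ, hρ, lt_of_lt_of_le hφ (by linarith), rfl⟩

lemma discSector_mono {θ α α' r r' : ℝ} (hα : α ≤ α') (hr : r ≤ r') :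
    DiscSector θ α r ⊆ DiscSector θ α' r' :=
  Set.union_subset_union (sector_mono hα) (Metric.ball_subset_ball hr)

lemma nonzeroDir_of_K {θ : ℝ} (h1 : 0 < |θ|) (h2 : |θ| ≤ Real.pi) : NonzeroDir θ := by
  rintro ⟨j, rfl⟩
  rcases lt_trichotomy j 0 with hj | rfl | hj
  · have : (j : ℝ) ≤ -1 := by exact_mod_cast (by omega : j ≤ -1)
    have hπ := Real.pi_pos
    rw [abs_of_neg (by nlinarith)] at h2
    nlinarith
  · simp at h1
  · have : (1 : ℝ) ≤ (j : ℝ) := by exact_mod_cast hj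
    have hπ := Real.pi_pos
    rw [abs_of_pos (by nlinarith)] at h2
    nlinarith


lemma rpow_le_one_add {u c : ℝ} (hu : 0 ≤ u) (hc0 : 0 < c) (hc1 : c ≤ 1) :
    u ^ c ≤ 1 + u := by
  rcases le_total u 1 with h | h
  · have : u ^ c ≤ 1 := Real.rpow_le_one hu h hc0.le
    linarith
  · have : u ^ c ≤ u ^ (1:ℝ) := Real.rpow_le_rpow_of_exponent_le h hc1
    rw [Real.rpow_one] at this
    linarith

lemma gevrey_term_le {p : ℕ} (hp : 1 ≤ p) {x : ℝ} (hx : 0 ≤ x) (n : ℕ) :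
    x ^ n * (n.factorial : ℝ) ^ (-(1 / (p : ℝ))) ≤
      (1/2 : ℝ) ^ n + ((2*x) ^ p) ^ n / n.factorial := by
  set y : ℝ := 2 * x with hy
  have hy0 : 0 ≤ y := by positivity
  have hp0 : (0:ℝ) < p := by exact_mod_cast hp
  have hfac : (0:ℝ) < n.factorial := by exact_mod_cast n.factorial_pos
  have key : ((y ^ (p*n) : ℝ) / n.factorial) ^ ((1:ℝ)/p)
      = y ^ n * ((n.factorial : ℝ)) ^ (-(1/(p:ℝ))) := by
    rw [Real.div_rpow (by positivity) hfac.le, Real.rpow_neg hfac.le,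
      ← Real.rpow_natCast y (p*n), ← Real.rpow_mul hy0, ← div_eq_mul_inv]
    congr 1
    rw [← Real.rpow_natCast y n]
    congr 1
    push_cast
    field_simp
  have hbound : ((y ^ (p*n) : ℝ) / n.factorial) ^ ((1:ℝ)/p) ≤ 1 + y ^ (p*n) / n.factorial :=
    rpow_le_one_add (by positivity) (by positivity) (by
      rw [div_le_one hp0]; exact_mod_cast hp)
  have hxy : x ^ n * (n.factorial : ℝ) ^ (-(1 / (p : ℝ)))
      = (1/2:ℝ)^n * (y ^ n * (n.factorial : ℝ) ^ (-(1/(p:ℝ)))) := by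
    rw [hy, mul_pow, ← mul_assoc, ← mul_assoc, ← mul_pow]
    norm_num
  calc x ^ n * (n.factorial : ℝ) ^ (-(1 / (p : ℝ)))
      = (1/2:ℝ)^n * (y ^ n * (n.factorial : ℝ) ^ (-(1/(p:ℝ)))) := hxy
    _ = (1/2:ℝ)^n * (((y ^ (p*n) : ℝ) / n.factorial) ^ ((1:ℝ)/p)) := by rw [← key]
    _ ≤ (1/2:ℝ)^n * (1 + y ^ (p*n) / n.factorial) := by
        apply mul_le_mul_of_nonneg_left hbound (by positivity)
    _ = (1/2:ℝ)^n + (1/2:ℝ)^n * (y ^ (p*n) / n.factorial) := by ring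
    _ ≤ (1/2:ℝ)^n + (y^p)^n / n.factorial := by
        rw [← pow_mul]
        have h1 : (1/2:ℝ)^n ≤ 1 := pow_le_one₀ (by norm_num) (by norm_num)
        have h2 : (0:ℝ) ≤ y ^ (p*n) / n.factorial := by positivity
        nlinarith

lemma summable_geom_add_exp {d : ℝ} (hd : 0 ≤ d) :
    Summable (fun n : ℕ => (1/2 : ℝ)^n + d^n / n.factorial) :=
  (summable_geometric_of_lt_one (by norm_num) (by norm_num)).add
    (Real.summable_pow_div_factorial d)

lemma tsum_geom_add_exp_le {d : ℝ} (hd : 0 ≤ d) :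
    ∑' n : ℕ, ((1/2 : ℝ)^n + d^n / n.factorial) ≤ 3 * Real.exp d := by
  rw [Summable.tsum_add (summable_geometric_of_lt_one (by norm_num) (by norm_num))
    (Real.summable_pow_div_factorial d)]
  have h1 : ∑' n : ℕ, (1/2 : ℝ)^n = 2 := by
    rw [tsum_geometric_of_lt_one (by norm_num) (by norm_num)]; norm_num
  have h2 : ∑' n : ℕ, d^n / n.factorial ≤ Real.exp d := by
    apply Summable.tsum_le_of_sum_range_le (Real.summable_pow_div_factorial d)
    intro n
    exact Real.sum_le_exp_of_nonneg hd n
  have h3 : (1:ℝ) ≤ Real.exp d := Real.one_le_exp hd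
  linarith




def rSeries (r : ℕ → ℝ) : FormalMultilinearSeries ℂ ℂ ℂ :=
  fun n => ((r n : ℝ) : ℂ) • ContinuousMultilinearMap.mkPiAlgebraFin ℂ n ℂ

lemma norm_rSeries (r : ℕ → ℝ) (n : ℕ) : ‖rSeries r n‖ = |r n| := by
  rw [rSeries]
  rw [norm_smul ((r n : ℝ) : ℂ) (ContinuousMultilinearMap.mkPiAlgebraFin ℂ n ℂ)]
  rw [ContinuousMultilinearMap.norm_mkPiAlgebraFin, mul_one, Complex.norm_real,
    Real.norm_eq_abs]

lemma rSeries_apply (r : ℕ → ℝ) (n : ℕ) (t : ℂ) :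
    (rSeries r n fun _ => t) = ((r n : ℝ) : ℂ) * t ^ n := by
  simp [rSeries, ContinuousMultilinearMap.mkPiAlgebraFin_apply, List.prod_ofFn]

section Bound

variable {r : ℕ → ℝ} {B C : ℝ} {p : ℕ}

/-- Summability of `|r n| x^n` under the Gevrey bound. -/
lemma summable_abs_r_mul (hB : 0 < B) (hC : 0 < C) (hp : 1 ≤ p)
    (hbound : ∀ n, |r n| ≤ B * C ^ n * (n.factorial : ℝ) ^ (-(1 / (p : ℝ))))
    {x : ℝ} (hx : 0 ≤ x) : Summable (fun n : ℕ => |r n| * x ^ n) := by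
  have hg : Summable (fun n : ℕ => B * ((1/2 : ℝ)^n + ((2*(C*x)) ^ p) ^ n / n.factorial)) :=
    (summable_geom_add_exp (by positivity)).mul_left B
  refine Summable.of_nonneg_of_le (fun n => by positivity) (fun n => ?_) hg
  calc |r n| * x ^ n ≤ (B * C ^ n * (n.factorial : ℝ) ^ (-(1 / (p : ℝ)))) * x ^ n := by
        apply mul_le_mul_of_nonneg_right (hbound n) (by positivity)
    _ = B * ((C*x) ^ n * (n.factorial : ℝ) ^ (-(1 / (p : ℝ)))) := by rw [mul_pow]; ring
    _ ≤ B * ((1/2 : ℝ)^n + ((2*(C*x)) ^ p) ^ n / n.factorial) := by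
        apply mul_le_mul_of_nonneg_left (gevrey_term_le hp (by positivity) n) hB.le

lemma tsum_abs_r_mul_le (hB : 0 < B) (hC : 0 < C) (hp : 1 ≤ p)
    (hbound : ∀ n, |r n| ≤ B * C ^ n * (n.factorial : ℝ) ^ (-(1 / (p : ℝ))))
    {x : ℝ} (hx : 0 ≤ x) :
    ∑' n : ℕ, |r n| * x ^ n ≤ (3 * B) * Real.exp ((2*C)^p * x ^ p) := by
  have hsum2 : Summable (fun n : ℕ => B * ((1/2 : ℝ)^n + ((2*(C*x)) ^ p) ^ n / n.factorial)) :=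
    (summable_geom_add_exp (by positivity)).mul_left B
  calc ∑' n : ℕ, |r n| * x ^ n
      ≤ ∑' n : ℕ, B * ((1/2 : ℝ)^n + ((2*(C*x)) ^ p) ^ n / n.factorial) := by
        apply Summable.tsum_le_tsum (fun n => ?_)
          (summable_abs_r_mul hB hC hp hbound hx) hsum2
        calc |r n| * x ^ n ≤ (B * C ^ n * (n.factorial : ℝ) ^ (-(1 / (p : ℝ)))) * x ^ n := by
              apply mul_le_mul_of_nonneg_right (hbound n) (by positivity)
          _ = B * ((C*x) ^ n * (n.factorial : ℝ) ^ (-(1 / (p : ℝ)))) := by rw [mul_pow]; ring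
          _ ≤ B * ((1/2 : ℝ)^n + ((2*(C*x)) ^ p) ^ n / n.factorial) := by
              apply mul_le_mul_of_nonneg_left (gevrey_term_le hp (by positivity) n) hB.le
    _ = B * ∑' n : ℕ, ((1/2 : ℝ)^n + ((2*(C*x)) ^ p) ^ n / n.factorial) := by
        rw [tsum_mul_left]
    _ ≤ B * (3 * Real.exp ((2*(C*x))^p)) := by
        apply mul_le_mul_of_nonneg_left (tsum_geom_add_exp_le (by positivity)) hB.le
    _ = (3 * B) * Real.exp ((2*C)^p * x ^ p) := by
        rw [show 2*(C*x) = (2*C)*x by ring, mul_pow]; ring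

lemma rSeries_radius_top (hB : 0 < B) (hC : 0 < C) (hp : 1 ≤ p)
    (hbound : ∀ n, |r n| ≤ B * C ^ n * (n.factorial : ℝ) ^ (-(1 / (p : ℝ)))) :
    (rSeries r).radius = ⊤ := by
  apply FormalMultilinearSeries.radius_eq_top_of_summable_norm
  intro ρ
  simp only [norm_rSeries]
  exact summable_abs_r_mul hB hC hp hbound ρ.coe_nonneg

lemma rSeries_hasSeries (hB : 0 < B) (hC : 0 < C) (hp : 1 ≤ p)
    (hbound : ∀ n, |r n| ≤ B * C ^ n * (n.factorial : ℝ) ^ (-(1 / (p : ℝ)))) :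
    HasFPowerSeriesOnBall (rSeries r).sum (rSeries r) 0 ⊤ := by
  have h := (rSeries r).hasFPowerSeriesOnBall
    (by rw [rSeries_radius_top hB hC hp hbound]; exact ENNReal.zero_lt_top)
  rwa [rSeries_radius_top hB hC hp hbound] at h

lemma rSeries_differentiable (hB : 0 < B) (hC : 0 < C) (hp : 1 ≤ p)
    (hbound : ∀ n, |r n| ≤ B * C ^ n * (n.factorial : ℝ) ^ (-(1 / (p : ℝ)))) :
    Differentiable ℂ (rSeries r).sum := by
  have h := (rSeries_hasSeries hB hC hp hbound).differentiableOn
  rw [show Metric.eball (0:ℂ) ⊤ = Set.univ from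
    Set.eq_univ_of_forall (fun x => Metric.mem_eball.2 (edist_lt_top x 0))] at h
  exact differentiableOn_univ.mp h

lemma rSeries_sum_eq (r : ℕ → ℝ) (t : ℂ) :
    (rSeries r).sum t = ∑' n : ℕ, ((r n : ℝ) : ℂ) * t ^ n := by
  rw [FormalMultilinearSeries.sum]
  exact tsum_congr (fun n => rSeries_apply r n t)

lemma rSeries_sum_norm_le (hB : 0 < B) (hC : 0 < C) (hp : 1 ≤ p)
    (hbound : ∀ n, |r n| ≤ B * C ^ n * (n.factorial : ℝ) ^ (-(1 / (p : ℝ)))) (t : ℂ) :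
    ‖(rSeries r).sum t‖ ≤ (3 * B) * Real.exp ((2*C)^p * ‖t‖ ^ p) := by
  rw [rSeries_sum_eq]
  have hnorm : ∀ n : ℕ, ‖((r n : ℝ) : ℂ) * t ^ n‖ = |r n| * ‖t‖ ^ n := by
    intro n; rw [norm_mul, norm_pow, Complex.norm_real, Real.norm_eq_abs]
  have hs : Summable (fun n : ℕ => ‖((r n : ℝ) : ℂ) * t ^ n‖) := by
    simp only [hnorm]
    exact summable_abs_r_mul hB hC hp hbound (norm_nonneg t)
  calc ‖∑' n : ℕ, ((r n : ℝ) : ℂ) * t ^ n‖ ≤ ∑' n : ℕ, ‖((r n : ℝ) : ℂ) * t ^ n‖ :=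
        norm_tsum_le_tsum_norm hs
    _ = ∑' n : ℕ, |r n| * ‖t‖ ^ n := tsum_congr hnorm
    _ ≤ (3 * B) * Real.exp ((2*C)^p * ‖t‖ ^ p) :=
        tsum_abs_r_mul_le hB hC hp hbound (norm_nonneg t)

end Bound




lemma re_cpow {z : ℂ} (hz : z ≠ 0) (k : ℝ) :
    (z ^ (k:ℂ)).re = ‖z‖ ^ k * Real.cos (k * z.arg) := by
  rw [Complex.cpow_def_of_ne_zero hz, Complex.exp_re, mul_comm (Complex.log z) (k:ℂ),
    Complex.re_ofReal_mul, Complex.im_ofReal_mul, Complex.log_re, Complex.log_im,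
    Real.rpow_def_of_pos (norm_pos_iff.mpr hz), mul_comm (Real.log (‖z‖)) k]

lemma abs_exp_neg_mul_cpow (c k : ℝ) {z : ℂ} (hz : z ≠ 0) :
    ‖Complex.exp (-(c:ℂ) * z ^ (k:ℂ))‖ =
      Real.exp (-(c * (‖z‖ ^ k * Real.cos (k * z.arg)))) := by
  rw [Complex.norm_exp]
  congr 1
  rw [neg_mul, Complex.neg_re, Complex.re_ofReal_mul, re_cpow hz]

lemma arg_exp_eq_im {w : ℂ} (h1 : -Real.pi < w.im) (h2 : w.im ≤ Real.pi) :
    (Complex.exp w).arg = w.im := by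
  have hexp : Complex.exp w = ((Real.exp w.re : ℝ) : ℂ) *
      (Complex.cos w.im + Complex.sin w.im * Complex.I) := by
    conv_lhs => rw [← Complex.re_add_im w]
    rw [Complex.exp_add, Complex.exp_mul_I, Complex.ofReal_exp]
  rw [hexp]
  exact Complex.arg_mul_cos_add_sin_mul_I (Real.exp_pos _) ⟨h1, h2⟩

lemma coeff_bound {f : ℂ → ℂ} {P : FormalMultilinearSeries ℂ ℂ ℂ}
    (hf : HasFPowerSeriesOnBall f P 0 ⊤) (hc : Differentiable ℂ f)
    {M R : ℝ} (hR : 0 < R) (hM : 0 ≤ M)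
    (hb : ∀ z : ℂ, ‖z‖ = R → ‖f z‖ ≤ M) (n : ℕ) :
    ‖P n‖ ≤ M / R ^ n := by
  set R' : NNReal := ⟨R, hR.le⟩ with hR'
  have hR'0 : 0 < R' := by exact_mod_cast hR
  have hdiff : DifferentiableOn ℂ f (Metric.closedBall 0 (R' : ℝ)) :=
    hc.differentiableOn
  have h2 : HasFPowerSeriesOnBall f (cauchyPowerSeries f 0 (R' : ℝ)) 0 R' :=
    hdiff.hasFPowerSeriesOnBall hR'0
  have heq : P = cauchyPowerSeries f 0 (R' : ℝ) :=
    hf.hasFPowerSeriesAt.eq_formalMultilinearSeries h2.hasFPowerSeriesAt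
  rw [heq]
  refine (norm_cauchyPowerSeries_le f 0 (R' : ℝ) n).trans ?_
  have hcoe : (R' : ℝ) = R := rfl
  rw [hcoe]
  have hint : ∫ θ in (0:ℝ)..2*Real.pi, ‖f (circleMap 0 R θ)‖ ≤ 2*Real.pi*M := by
    have hi1 : IntervalIntegrable (fun θ : ℝ => ‖f (circleMap 0 R θ)‖) MeasureTheory.volume
        0 (2*Real.pi) :=
      ((hc.continuous.comp (continuous_circleMap 0 R)).norm).intervalIntegrable _ _
    calc ∫ θ in (0:ℝ)..2*Real.pi, ‖f (circleMap 0 R θ)‖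
        ≤ ∫ _ in (0:ℝ)..2*Real.pi, M := by
          apply intervalIntegral.integral_mono_on Real.two_pi_pos.le hi1
            intervalIntegrable_const
          intro θ _
          apply hb
          rw [norm_circleMap_zero, abs_of_pos hR]
      _ = 2*Real.pi*M := by
          rw [intervalIntegral.integral_const, smul_eq_mul]; ring
  calc ((2 * Real.pi)⁻¹ * ∫ θ : ℝ in (0)..2 * Real.pi, ‖f (circleMap 0 R θ)‖) * |R|⁻¹ ^ n
      ≤ ((2 * Real.pi)⁻¹ * (2*Real.pi*M)) * |R|⁻¹ ^ n := by
        apply mul_le_mul_of_nonneg_right _ (by positivity)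
        apply mul_le_mul_of_nonneg_left hint (by positivity)
    _ = M / R ^ n := by
        rw [abs_of_pos hR, ← mul_assoc, inv_mul_cancel₀ Real.two_pi_pos.ne', one_mul,
          inv_pow, div_eq_mul_inv]

set_option maxHeartbeats 2000000 in
lemma global_bound {H : ℂ → ℂ} (hdiff : Differentiable ℂ H) {p : ℕ} (hp : 1 ≤ p)
    {A₀ B₀ : ℝ} (hA₀ : 0 < A₀) (hB₀ : 0 < B₀)
    (hglob : ∀ t : ℂ, ‖H t‖ ≤ A₀ * Real.exp (B₀ * ‖t‖ ^ p)) {k' : ℝ} (hk' : 0 < k')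
    (key : ∀ θ : ℝ, NonzeroDir θ → ∃ α A B : ℝ, 0 < α ∧ 0 < A ∧ 0 < B ∧
      ∀ t ∈ Sector θ α, ‖H t‖ ≤ A * Real.exp (B * ‖t‖ ^ k'))
    (hH0 : H 0 = 0) :
    ∃ A B : ℝ, 0 < A ∧ 0 < B ∧ ∀ t : ℂ, ‖H t‖ ≤ A * Real.exp (B * ‖t‖ ^ k') := by
  have hπ := Real.pi_pos
  have hp0 : (0:ℝ) < p := by exact_mod_cast hp
  set δ : ℝ := Real.pi / (2 * ((p:ℝ) + k' + 1)) with hδdef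
  have hδ0 : 0 < δ := by positivity
  have h2δ : δ * (2 * ((p:ℝ) + k' + 1)) = Real.pi := by
    rw [hδdef]; field_simp
  have hδhalf : δ < Real.pi / 2 := by nlinarith
  have hk'δ : k' * δ < Real.pi / 2 := by nlinarith
  -- unconditional choice of sector data
  have key' : ∀ θ : ℝ, ∃ α A B : ℝ, 0 < α ∧ 0 < A ∧ 0 < B ∧
      (NonzeroDir θ → ∀ t ∈ Sector θ α, ‖H t‖ ≤ A * Real.exp (B * ‖t‖ ^ k')) := by
    intro θ
    by_cases h : NonzeroDir θ
    · obtain ⟨α, A, B, h1, h2, h3, h4⟩ := key θ h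
      exact ⟨α, A, B, h1, h2, h3, fun _ => h4⟩
    · exact ⟨1, 1, 1, one_pos, one_pos, one_pos, fun h' => absurd h' h⟩
  choose α A B hα hA hB hbnd using key'
  set K : Set ℝ := Set.Icc δ Real.pi ∪ Set.Icc (-Real.pi) (-δ) with hKdef
  have hKc : IsCompact K := isCompact_Icc.union isCompact_Icc
  obtain ⟨T, hTK, hTcov⟩ := hKc.elim_nhds_subcover
    (fun θ => Set.Ioo (θ - α θ / 2) (θ + α θ / 2))
    (fun θ _ => Ioo_mem_nhds (by linarith [hα θ]) (by linarith [hα θ]))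
  set A₁ : ℝ := A₀ + ∑ θ ∈ T, A θ with hA₁def
  set B₁ : ℝ := B₀ + ∑ θ ∈ T, B θ with hB₁def
  have hA₁ : 0 < A₁ := by
    have : 0 ≤ ∑ θ ∈ T, A θ := Finset.sum_nonneg (fun θ _ => (hA θ).le)
    linarith
  have hB₁ : 0 < B₁ := by
    have : 0 ≤ ∑ θ ∈ T, B θ := Finset.sum_nonneg (fun θ _ => (hB θ).le)
    linarith
  have hAle : ∀ θ ∈ T, A θ ≤ A₁ := by
    intro θ hθ
    have := Finset.single_le_sum (f := A) (fun i _ => (hA i).le) hθ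
    linarith
  have hBle : ∀ θ ∈ T, B θ ≤ B₁ := by
    intro θ hθ
    have := Finset.single_le_sum (f := B) (fun i _ => (hB i).le) hθ
    linarith
  -- bound outside the gap sector
  have hsec : ∀ t : ℂ, t ≠ 0 → δ ≤ |t.arg| → ‖H t‖ ≤ A₁ * Real.exp (B₁ * ‖t‖ ^ k') := by
    intro t ht hδt
    have hargK : t.arg ∈ K := by
      rcases le_or_gt 0 t.arg with h | h
      · exact Or.inl ⟨by rwa [_root_.abs_of_nonneg h] at hδt, Complex.arg_le_pi t⟩
      · refine Or.inr ⟨(Complex.neg_pi_lt_arg t).le, ?_⟩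
        rw [_root_.abs_of_neg h] at hδt; linarith
    have := hTcov hargK
    rw [Set.mem_iUnion₂] at this
    obtain ⟨θ, hθT, hθmem⟩ := this
    have hts : t ∈ Sector θ (α θ) :=
      mem_sector_of_arg ht (abs_sub_lt_iff.2 ⟨by linarith [hθmem.2], by linarith [hθmem.1]⟩)
    have hθK : θ ∈ K := hTK θ hθT
    have hNZ : NonzeroDir θ := by
      apply nonzeroDir_of_K
      · rcases hθK with h' | h'
        · rw [_root_.abs_of_pos (by linarith [h'.1])]; linarith [h'.1]
        · rw [_root_.abs_of_neg (by linarith [h'.2])]; linarith [h'.2]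
      · rcases hθK with h' | h'
        · rw [_root_.abs_of_pos (by linarith [h'.1])]; exact h'.2
        · rw [_root_.abs_of_neg (by linarith [h'.2])]; linarith [h'.1]
    have hx : (0:ℝ) ≤ ‖t‖ ^ k' := Real.rpow_nonneg (norm_nonneg t) k'
    calc ‖H t‖ ≤ A θ * Real.exp (B θ * ‖t‖ ^ k') := hbnd θ hNZ t hts
      _ ≤ A₁ * Real.exp (B₁ * ‖t‖ ^ k') := by
          apply mul_le_mul (hAle θ hθT) (Real.exp_le_exp.2 ?_) (Real.exp_pos _).le hA₁.le
          exact mul_le_mul_of_nonneg_right (hBle θ hθT) hx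
  -- Phragmen-Lindelof on the gap sector
  have hcosδ : 0 < Real.cos (k' * δ) :=
    Real.cos_pos_of_mem_Ioo ⟨by nlinarith, hk'δ⟩
  set c : ℝ := B₁ / Real.cos (k' * δ) with hcdef
  have hc : 0 < c := div_pos hB₁ hcosδ
  set g : ℂ → ℂ := fun z => H z * Complex.exp (-(c:ℂ) * z ^ ((k' : ℝ) : ℂ)) with hgdef
  set F : ℂ → ℂ := fun w => g (Complex.exp w) with hFdef
  have hgnorm : ∀ z : ℂ, z ≠ 0 →
      ‖g z‖ = ‖H z‖ * Real.exp (-(c * (‖z‖ ^ k' * Real.cos (k' * z.arg)))) := by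
    intro z hz
    rw [hgdef]
    simp only [norm_mul]
    rw [abs_exp_neg_mul_cpow c k' hz]
  have hFdiffAt : ∀ w : ℂ, |w.im| < Real.pi / 2 → DifferentiableAt ℂ F w := by
    intro w hw
    have hcos : 0 < Real.cos w.im :=
      Real.cos_pos_of_mem_Ioo ⟨by linarith [abs_lt.1 hw |>.1], (abs_lt.1 hw).2⟩
    have hz : 0 < (Complex.exp w).re := by
      rw [Complex.exp_re]
      positivity
    have hgAt : DifferentiableAt ℂ g (Complex.exp w) := by
      apply (hdiff _).mul
      apply DifferentiableAt.cexp
      exact (differentiableAt_const _).mul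
        (differentiableAt_id.cpow (differentiableAt_const _) (Or.inl hz))
    exact hgAt.comp w (Complex.differentiable_exp.differentiableAt)
  have harg : ∀ w : ℂ, |w.im| ≤ δ → (Complex.exp w).arg = w.im := by
    intro w hw
    exact arg_exp_eq_im (by linarith [(abs_le.1 hw).1, hδhalf])
      (by linarith [(abs_le.1 hw).2, hδhalf])
  have habs : ∀ w : ℂ, ‖Complex.exp w‖ = Real.exp w.re := Complex.norm_exp
  have hPL : ∀ w : ℂ, -δ ≤ w.im → w.im ≤ δ → ‖F w‖ ≤ A₁ := by
    intro w h1 h2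
    apply PhragmenLindelof.horizontal_strip (a := -δ) (b := δ) (C := A₁) (f := F) ?hfd ?hB
      ?hle_a ?hle_b h1 h2
    case hfd =>
      constructor
      · intro w' hw'
        refine (hFdiffAt w' ?_).differentiableWithinAt
        simp only [Set.mem_preimage, Set.mem_Ioo] at hw'
        rw [abs_lt]
        exact ⟨by linarith [hw'.1, hδhalf], by linarith [hw'.2, hδhalf]⟩
      · intro w' hw'
        have hsub : w'.im ∈ closure (Set.Ioo (-δ) δ) :=
          (Complex.continuous_im.closure_preimage_subset (Set.Ioo (-δ) δ)) hw'
        rw [closure_Ioo (show -δ ≠ δ by intro h'; linarith)] at hsub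
        refine (hFdiffAt w' ?_).continuousAt.continuousWithinAt
        rw [abs_lt]
        exact ⟨by linarith [hsub.1, hδhalf], by linarith [hsub.2, hδhalf]⟩
    case hB =>
      refine ⟨(p : ℝ), ?_, B₀, ?_⟩
      · have hval : Real.pi / (δ - -δ) = (p:ℝ) + k' + 1 := by
          rw [show δ - -δ = 2 * δ by ring, div_eq_iff (by positivity)]
          linarith [h2δ]
        rw [hval]
        linarith
      · rw [Asymptotics.isBigO_iff]
        refine ⟨A₀, ?_⟩
        rw [Filter.eventually_inf_principal]
        apply Filter.Eventually.of_forall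
        intro w hw
        simp only [Set.mem_preimage, Set.mem_Ioo] at hw
        have hzne : Complex.exp w ≠ 0 := Complex.exp_ne_zero w
        have hargw : (Complex.exp w).arg = w.im := harg w (by
          rw [abs_le]; exact ⟨hw.1.le, hw.2.le⟩)
        have hcosnn : 0 ≤ Real.cos (k' * (Complex.exp w).arg) := by
          rw [hargw]
          apply Real.cos_nonneg_of_mem_Icc
          constructor
          · rcases le_or_gt 0 w.im with h | h
            · nlinarith
            · nlinarith [hw.1]
          · rcases le_or_gt 0 w.im with h | h
            · nlinarith [hw.2]
            · nlinarith
        have hF1 : ‖F w‖ ≤ ‖H (Complex.exp w)‖ := by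
          rw [hFdef]
          simp only []
          rw [hgnorm _ hzne]
          have : Real.exp (-(c * (‖Complex.exp w‖ ^ k' *
              Real.cos (k' * (Complex.exp w).arg)))) ≤ 1 := by
            rw [Real.exp_le_one_iff]
            have h1 : 0 ≤ ‖Complex.exp w‖ ^ k' :=
              Real.rpow_nonneg (norm_nonneg _) k'
            have := mul_nonneg (mul_nonneg hc.le (mul_nonneg h1 hcosnn)) (le_refl (0:ℝ))
            nlinarith [mul_nonneg hc.le (mul_nonneg h1 hcosnn)]
          calc ‖H (Complex.exp w)‖ * Real.exp (-(c * (‖Complex.exp w‖ ^ k' *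
              Real.cos (k' * (Complex.exp w).arg)))) ≤ ‖H (Complex.exp w)‖ * 1 :=
                mul_le_mul_of_nonneg_left this (norm_nonneg _)
            _ = ‖H (Complex.exp w)‖ := mul_one _
        have hF2 : ‖H (Complex.exp w)‖ ≤ A₀ * Real.exp (B₀ * Real.exp ((p:ℝ) * |w.re|)) := by
          refine (hglob _).trans ?_
          apply mul_le_mul_of_nonneg_left _ hA₀.le
          rw [Real.exp_le_exp]
          apply mul_le_mul_of_nonneg_left _ hB₀.le
          rw [habs w, ← Real.exp_nat_mul]
          rw [Real.exp_le_exp]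
          calc (p:ℝ) * w.re ≤ (p:ℝ) * |w.re| :=
            mul_le_mul_of_nonneg_left (le_abs_self _) hp0.le
            _ = (p:ℝ) * |w.re| := rfl
        rw [Real.norm_eq_abs, Real.abs_exp]
        exact hF1.trans hF2
    case hle_a =>
      intro w hw
      have hzne : Complex.exp w ≠ 0 := Complex.exp_ne_zero w
      have hargw : (Complex.exp w).arg = w.im := harg w (by rw [hw, abs_neg, _root_.abs_of_pos hδ0])
      have habsarg : |(Complex.exp w).arg| = δ := by rw [hargw, hw, abs_neg, _root_.abs_of_pos hδ0]
      have hHb : ‖H (Complex.exp w)‖ ≤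
          A₁ * Real.exp (B₁ * ‖Complex.exp w‖ ^ k') := by
        have := hsec (Complex.exp w) hzne (by rw [habsarg])
        exact this
      rw [hFdef]
      simp only []
      rw [hgnorm _ hzne, hargw, hw, mul_neg, Real.cos_neg]
      have hcc : c * Real.cos (k' * δ) = B₁ := div_mul_cancel₀ B₁ hcosδ.ne'
      calc ‖H (Complex.exp w)‖ *
          Real.exp (-(c * (‖Complex.exp w‖ ^ k' * Real.cos (k' * δ))))
          ≤ (A₁ * Real.exp (B₁ * ‖Complex.exp w‖ ^ k')) *
            Real.exp (-(c * (‖Complex.exp w‖ ^ k' * Real.cos (k' * δ)))) :=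
            mul_le_mul_of_nonneg_right hHb (Real.exp_pos _).le
        _ = A₁ := by
            rw [mul_assoc, ← Real.exp_add]
            have : B₁ * ‖Complex.exp w‖ ^ k' +
                -(c * (‖Complex.exp w‖ ^ k' * Real.cos (k' * δ))) = 0 := by
              rw [show c * (‖Complex.exp w‖ ^ k' * Real.cos (k' * δ)) =
                (c * Real.cos (k' * δ)) * ‖Complex.exp w‖ ^ k' by ring, hcc]
              ring
            rw [this, Real.exp_zero, mul_one]
    case hle_b =>
      intro w hw
      have hzne : Complex.exp w ≠ 0 := Complex.exp_ne_zero w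
      have hargw : (Complex.exp w).arg = w.im := harg w (by rw [hw, _root_.abs_of_pos hδ0])
      have habsarg : |(Complex.exp w).arg| = δ := by rw [hargw, hw, _root_.abs_of_pos hδ0]
      have hHb : ‖H (Complex.exp w)‖ ≤
          A₁ * Real.exp (B₁ * ‖Complex.exp w‖ ^ k') := by
        have := hsec (Complex.exp w) hzne (by rw [habsarg])
        exact this
      rw [hFdef]
      simp only []
      rw [hgnorm _ hzne, hargw, hw]
      have hcc : c * Real.cos (k' * δ) = B₁ := div_mul_cancel₀ B₁ hcosδ.ne'
      calc ‖H (Complex.exp w)‖ *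
          Real.exp (-(c * (‖Complex.exp w‖ ^ k' * Real.cos (k' * δ))))
          ≤ (A₁ * Real.exp (B₁ * ‖Complex.exp w‖ ^ k')) *
            Real.exp (-(c * (‖Complex.exp w‖ ^ k' * Real.cos (k' * δ)))) :=
            mul_le_mul_of_nonneg_right hHb (Real.exp_pos _).le
        _ = A₁ := by
            rw [mul_assoc, ← Real.exp_add]
            have : B₁ * ‖Complex.exp w‖ ^ k' +
                -(c * (‖Complex.exp w‖ ^ k' * Real.cos (k' * δ))) = 0 := by
              rw [show c * (‖Complex.exp w‖ ^ k' * Real.cos (k' * δ)) =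
                (c * Real.cos (k' * δ)) * ‖Complex.exp w‖ ^ k' by ring, hcc]
              ring
            rw [this, Real.exp_zero, mul_one]
  -- bound inside the gap sector
  have hsec2 : ∀ t : ℂ, t ≠ 0 → |t.arg| ≤ δ → ‖H t‖ ≤ A₁ * Real.exp (c * ‖t‖ ^ k') := by
    intro t ht hargt
    set w : ℂ := (Real.log (‖t‖) : ℂ) + (t.arg : ℂ) * Complex.I with hwdef
    have him : w.im = t.arg := by
      simp [hwdef]
    have hexpw : Complex.exp w = t := by
      rw [hwdef, Complex.exp_add, ← Complex.ofReal_exp, Real.exp_log (norm_pos_iff.mpr ht)]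
      exact Complex.norm_mul_exp_arg_mul_I t
    have hple := hPL w (by rw [him]; linarith [(abs_le.1 hargt).1])
      (by rw [him]; linarith [(abs_le.1 hargt).2])
    rw [hFdef] at hple
    simp only [] at hple
    rw [hexpw, hgnorm t ht] at hple
    have hcos1 : Real.cos (k' * t.arg) ≤ 1 := Real.cos_le_one _
    have hx : (0:ℝ) ≤ ‖t‖ ^ k' := Real.rpow_nonneg (norm_nonneg t) k'
    have step : ‖H t‖ ≤ A₁ * Real.exp (c * (‖t‖ ^ k' * Real.cos (k' * t.arg))) := by
      have hmul := mul_le_mul_of_nonneg_right hple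
        (Real.exp_pos (c * (‖t‖ ^ k' * Real.cos (k' * t.arg)))).le
      rw [mul_assoc, ← Real.exp_add, neg_add_cancel, Real.exp_zero, mul_one] at hmul
      exact hmul
    refine step.trans ?_
    apply mul_le_mul_of_nonneg_left _ hA₁.le
    rw [Real.exp_le_exp]
    apply mul_le_mul_of_nonneg_left _ hc.le
    nlinarith
  -- combine
  refine ⟨A₁, max B₁ c, hA₁, lt_max_of_lt_left hB₁, ?_⟩
  intro t
  have hx : (0:ℝ) ≤ ‖t‖ ^ k' := Real.rpow_nonneg (norm_nonneg t) k'
  by_cases ht : t = 0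
  · rw [ht, hH0]
    simp only [norm_zero]
    positivity
  · rcases le_or_gt |t.arg| δ with h | h
    · refine (hsec2 t ht h).trans ?_
      apply mul_le_mul_of_nonneg_left _ hA₁.le
      rw [Real.exp_le_exp]
      exact mul_le_mul_of_nonneg_right (le_max_right _ _) hx
    · refine (hsec t ht h.le).trans ?_
      apply mul_le_mul_of_nonneg_left _ hA₁.le
      rw [Real.exp_le_exp]
      exact mul_le_mul_of_nonneg_right (le_max_left _ _) hx


/-- If `m̃` preserves summability and `r(n) = m(n) - m̃(n)` satisfies a Gevrey
order `-1/k` bound for some `k > 0` but fails every Gevrey order `-1/k'` bound for some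
`k' > 0`, then `m` does not preserve summability. -/
theorem perturbation_not_Gevrey_neg_infty_not_preserves_summability
    (mt m : ℕ → ℝ) (hmt_pos : ∀ n, 0 < mt n) (hmt0 : mt 0 = 1)
    (hm_pos : ∀ n, 0 < m n) (hm0 : m 0 = 1)
    (hmt : PreservesSummability mt)
    (r : ℕ → ℝ) (hr : ∀ n, r n = m n - mt n)
    (hk : ∃ k : ℝ, 0 < k ∧
      (∃ B : ℝ, 0 < B ∧ ∃ C : ℝ, 0 < C ∧ ∀ n : ℕ,
        |r n| ≤ B * C ^ n * (n.factorial : ℝ) ^ (-(1 / k))) ∧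
      (∃ k' : ℝ, 0 < k' ∧
        ¬ ∃ B' : ℝ, 0 < B' ∧ ∃ C' : ℝ, 0 < C' ∧ ∀ n : ℕ,
          |r n| ≤ B' * C' ^ n * (n.factorial : ℝ) ^ (-(1 / k')))) :
    ¬ PreservesSummability m := by
  obtain ⟨k, hk0, ⟨B, hB, C, hC, hbd⟩, k', hk'0, hnot⟩ := hk
  intro hm
  apply hnot
  set p : ℕ := ⌈k⌉₊ with hpdef
  have hppos : 0 < p := Nat.ceil_pos.mpr hk0
  have hp1 : 1 ≤ p := hppos
  have hkp : k ≤ (p : ℝ) := Nat.le_ceil k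
  have hbd' : ∀ n, |r n| ≤ B * C ^ n * (n.factorial : ℝ) ^ (-(1 / (p : ℝ))) := by
    intro n
    refine (hbd n).trans ?_
    have h1 : (1:ℝ) ≤ (n.factorial : ℝ) := by exact_mod_cast n.factorial_pos
    apply mul_le_mul_of_nonneg_left _ (by positivity)
    apply Real.rpow_le_rpow_of_exponent_le h1
    have h2 : 1/(p:ℝ) ≤ 1/k := one_div_le_one_div_of_le hk0 hkp
    linarith
  have hser : HasFPowerSeriesOnBall (rSeries r).sum (rSeries r) 0 ⊤ :=
    rSeries_hasSeries hB hC hp1 hbd'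
  have hdiff : Differentiable ℂ (rSeries r).sum := rSeries_differentiable hB hC hp1 hbd'
  have hglob : ∀ t : ℂ, ‖(rSeries r).sum t‖ ≤ (3*B) * Real.exp ((2*C)^p * ‖t‖ ^ p) :=
    fun t => rSeries_sum_norm_le hB hC hp1 hbd' t
  have hr0 : r 0 = 0 := by rw [hr 0, hm0, hmt0]; ring
  have hH0 : (rSeries r).sum 0 = 0 := by
    rw [rSeries_sum_eq]
    rw [tsum_eq_single 0 (fun n hn => by rw [zero_pow hn, mul_zero])]
    rw [hr0]
    simp
  obtain ⟨Rm, hRm, hmR⟩ := hm.2.1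
  obtain ⟨Rt, hRt, htR⟩ := hmt.2.1
  have key : ∀ θ : ℝ, NonzeroDir θ → ∃ α A Bc : ℝ, 0 < α ∧ 0 < A ∧ 0 < Bc ∧
      ∀ t ∈ Sector θ α, ‖(rSeries r).sum t‖ ≤ A * Real.exp (Bc * ‖t‖ ^ k') := by
    intro θ hθ
    obtain ⟨αm, hαm, rm, hrm, Um, hUmo, hUms, Fm, Gm, hFmd, hGmd, ⟨εm, hεm, hmval⟩,
      Am, Bm, hAm, hBm, hmbd⟩ := hm.2.2 k' hk'0 θ hθ
    obtain ⟨αt, hαt, rt, hrt, Ut, hUto, hUts, Ft, Gt, hFtd, hGtd, ⟨εt, hεt, htval⟩,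
      At, Bt, hAt, hBt, htbd⟩ := hmt.2.2 k' hk'0 θ hθ
    refine ⟨min αm αt, Am + At, max Bm Bt, lt_min hαm hαt, by positivity,
      lt_max_of_lt_left hBm, ?_⟩
    intro t htmem
    have hDm : DiscSector θ (min αm αt) (min rm rt) ⊆ DiscSector θ αm rm :=
      discSector_mono (min_le_left _ _) (min_le_left _ _)
    have hDt : DiscSector θ (min αm αt) (min rm rt) ⊆ DiscSector θ αt rt :=
      discSector_mono (min_le_right _ _) (min_le_right _ _)
    have hDU : DiscSector θ (min αm αt) (min rm rt) ⊆ Um ∩ Ut :=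
      Set.subset_inter (hDm.trans hUms) (hDt.trans hUts)
    have h0D : (0:ℂ) ∈ DiscSector θ (min αm αt) (min rm rt) :=
      Or.inr (Metric.mem_ball_self (lt_min hrm hrt))
    have h0U : (0:ℂ) ∈ Um ∩ Ut := hDU h0D
    have hΩo : IsOpen (connectedComponentIn (Um ∩ Ut) 0) :=
      (hUmo.inter hUto).connectedComponentIn
    have hΩsub : connectedComponentIn (Um ∩ Ut) 0 ⊆ Um ∩ Ut :=
      connectedComponentIn_subset _ _
    have hDΩ : DiscSector θ (min αm αt) (min rm rt) ⊆ connectedComponentIn (Um ∩ Ut) 0 :=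
      (isConnected_discSector (lt_min hαm hαt)
        (lt_min hrm hrt)).isPreconnected.subset_connectedComponentIn h0D hDU
    have hev : (rSeries r).sum =ᶠ[nhds (0:ℂ)] (fun z => Gm z - Gt z) := by
      have hpos : (0:ℝ) < min (min εm εt) (min Rm Rt) := by positivity
      have hball : Metric.ball (0:ℂ) (min (min εm εt) (min Rm Rt)) ∈ nhds (0:ℂ) :=
        Metric.ball_mem_nhds _ hpos
      refine Filter.eventuallyEq_of_mem hball ?_
      intro t' ht'
      have hn : ‖t'‖ < min (min εm εt) (min Rm Rt) := by rwa [mem_ball_zero_iff] at ht'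
      have hsm : Summable (fun n : ℕ => (m n : ℂ) * t' ^ n) :=
        hmR t' (lt_of_lt_of_le hn ((min_le_right _ _).trans (min_le_left _ _)))
      have hst : Summable (fun n : ℕ => (mt n : ℂ) * t' ^ n) :=
        htR t' (lt_of_lt_of_le hn ((min_le_right _ _).trans (min_le_right _ _)))
      have hGm : Gm t' = ∑' n : ℕ, (m n : ℂ) * t' ^ n :=
        (hmval t' (lt_of_lt_of_le hn ((min_le_left _ _).trans (min_le_left _ _)))).2
      have hGt : Gt t' = ∑' n : ℕ, (mt n : ℂ) * t' ^ n :=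
        (htval t' (lt_of_lt_of_le hn ((min_le_left _ _).trans (min_le_right _ _)))).2
      show (rSeries r).sum t' = Gm t' - Gt t'
      rw [rSeries_sum_eq, hGm, hGt, ← Summable.tsum_sub hsm hst]
      apply tsum_congr
      intro n
      rw [hr n]
      push_cast
      ring
    have hHeq : Set.EqOn (rSeries r).sum (fun z => Gm z - Gt z)
        (connectedComponentIn (Um ∩ Ut) 0) := by
      apply AnalyticOnNhd.eqOn_of_preconnected_of_eventuallyEq
        ((hdiff.differentiableOn).analyticOnNhd hΩo)
        (((hGmd.mono (hΩsub.trans Set.inter_subset_left)).sub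
          (hGtd.mono (hΩsub.trans Set.inter_subset_right))).analyticOnNhd hΩo)
        isPreconnected_connectedComponentIn
        (mem_connectedComponentIn h0U) hev
    have htD : t ∈ DiscSector θ (min αm αt) (min rm rt) := Or.inl htmem
    have hHt : (rSeries r).sum t = Gm t - Gt t := hHeq (hDΩ htD)
    rw [hHt]
    have h1 := (hmbd t (hDm htD)).2
    have h2 := (htbd t (hDt htD)).2
    have hx : (0:ℝ) ≤ ‖t‖ ^ k' := Real.rpow_nonneg (norm_nonneg t) k'
    have e1 : Real.exp (Bm * ‖t‖^k') ≤ Real.exp (max Bm Bt * ‖t‖^k') :=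
      Real.exp_le_exp.2 (mul_le_mul_of_nonneg_right (le_max_left _ _) hx)
    have e2 : Real.exp (Bt * ‖t‖^k') ≤ Real.exp (max Bm Bt * ‖t‖^k') :=
      Real.exp_le_exp.2 (mul_le_mul_of_nonneg_right (le_max_right _ _) hx)
    calc ‖Gm t - Gt t‖ ≤ ‖Gm t‖ + ‖Gt t‖ := norm_sub_le _ _
      _ ≤ Am * Real.exp (Bm * ‖t‖^k') + At * Real.exp (Bt * ‖t‖^k') := add_le_add h1 h2
      _ ≤ Am * Real.exp (max Bm Bt * ‖t‖^k') + At * Real.exp (max Bm Bt * ‖t‖^k') :=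
          add_le_add (mul_le_mul_of_nonneg_left e1 hAm.le)
            (mul_le_mul_of_nonneg_left e2 hAt.le)
      _ = (Am + At) * Real.exp (max Bm Bt * ‖t‖^k') := by ring
  obtain ⟨A₂, B₂, hA₂, hB₂, hfinal⟩ := global_bound hdiff hp1 (by positivity)
    (by positivity) hglob hk'0 key hH0
  refine ⟨A₂, hA₂, Real.exp B₂, Real.exp_pos _, ?_⟩
  intro n
  rcases Nat.eq_zero_or_pos n with rfl | hn
  · rw [hr0]
    simp only [abs_zero, pow_zero, mul_one, Nat.factorial_zero, Nat.cast_one, Real.one_rpow]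
    positivity
  · set R : ℝ := (n:ℝ) ^ (1/k') with hRdef
    have hn0 : (0:ℝ) < n := by exact_mod_cast hn
    have hR0 : 0 < R := Real.rpow_pos_of_pos hn0 _
    have hRk : R ^ k' = (n:ℝ) := by
      rw [hRdef, ← Real.rpow_mul hn0.le, one_div, inv_mul_cancel₀ hk'0.ne', Real.rpow_one]
    have hb : ∀ z : ℂ, ‖z‖ = R → ‖(rSeries r).sum z‖ ≤
        A₂ * Real.exp (B₂ * (n:ℝ)) := by
      intro z hz
      refine (hfinal z).trans ?_
      rw [hz, hRk]
    have hcb := coeff_bound hser hdiff hR0 (by positivity) hb n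
    rw [norm_rSeries] at hcb
    refine hcb.trans ?_
    have hRn : R ^ n = (((n:ℝ))^n) ^ ((1:ℝ)/k') := by
      rw [hRdef, ← Real.rpow_natCast (((n:ℝ)) ^ ((1:ℝ)/k')) n, ← Real.rpow_mul hn0.le,
        mul_comm (1/k') (n:ℝ), Real.rpow_mul hn0.le, Real.rpow_natCast]
    have hfact : ((n.factorial : ℝ)) ^ (-(1/k')) ≥ (((n:ℝ))^n) ^ (-(1/k')) := by
      apply Real.rpow_le_rpow_of_nonpos (by exact_mod_cast n.factorial_pos)
        (by exact_mod_cast Nat.factorial_le_pow n) (neg_nonpos.mpr (by positivity))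
    have hexpn : Real.exp (B₂ * (n:ℝ)) = (Real.exp B₂)^n := by
      rw [mul_comm, Real.exp_nat_mul]
    rw [hRn, hexpn]
    rw [div_eq_mul_inv, ← Real.rpow_neg (by positivity)]
    calc A₂ * (Real.exp B₂)^n * (((n:ℝ))^n) ^ (-(1/k'))
        ≤ A₂ * (Real.exp B₂)^n * ((n.factorial : ℝ)) ^ (-(1/k')) := by
          apply mul_le_mul_of_nonneg_left hfact (by positivity)
      _ = A₂ * (Real.exp B₂)^n * ((n.factorial : ℝ)) ^ (-(1/k')) := rfl
end
end

section
/- Fix q > 1. Let m̃ : ℕ → (0,∞) be a sequence with m̃(0) = 1 that preserves q-Gevrey asymptotic expansions, and let m : ℕ → (0,∞) be a sequence with m(0) = 1 such that for every s > 0 there exist A_s, B_s > 0 and α_s ∈ ℝ satisfying |m(n) − m̃(n)| ≤ A_s·B_s^n·(n!)^{α_s}·q^{−s·n(n−1)/2} for every n ∈ ℕ. Then m also preserves q-Gevrey asymptotic expansions. -/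
open Complex MeasureTheory

noncomputable section

namespace QGevreyAux

lemma key_term (a u : ℝ) (ha : 0 < a) (n : ℕ) :
    (n : ℝ) * u - a * n * ((n:ℝ) - 1) / 2 ≤ (u + 1 + a/2)^2 / (2*a) - n := by
  have h2a : (0:ℝ) < 2*a := by linarith
  have h : ((n:ℝ)*u - a*n*((n:ℝ)-1)/2 + n) * (2*a) ≤ (u+1+a/2)^2 := by
    nlinarith [sq_nonneg ((u + 1 + a/2) - a * (n:ℝ))]
  have := (le_div_iff₀ h2a).2 h
  linarith

lemma exp_neg_summable : Summable (fun n : ℕ => Real.exp (-(n:ℝ))) := by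
  have : ∀ n : ℕ, Real.exp (-(n:ℝ)) = (Real.exp (-1))^n := by
    intro n; rw [← Real.exp_nat_mul]; ring_nf
  simp_rw [this]
  exact summable_geometric_of_lt_one (Real.exp_pos _).le
    (Real.exp_lt_one_iff.2 (by norm_num))

lemma core_bound {d : ℕ → ℝ} {K c a : ℝ} (ha : 0 < a) (hc : 0 < c)
    (hd : ∀ n, |d n| ≤ K * c^n * Real.exp (-(a*n*((n:ℝ)-1)/2)))
    {x z : ℝ} (hx : 0 ≤ x) (hz : 0 < z) (hcx : c * x ≤ z) (n : ℕ) :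
    |d n| * x^n ≤ K * Real.exp ((Real.log z + 1 + a/2)^2/(2*a)) * Real.exp (-(n:ℝ)) := by
  have hK : 0 ≤ K := by
    have h0 := hd 0; simp at h0
    exact le_trans (abs_nonneg _) h0
  have h1 : |d n| * x^n ≤ K * (c*x)^n * Real.exp (-(a*n*((n:ℝ)-1)/2)) := by
    calc |d n| * x^n ≤ (K * c^n * Real.exp (-(a*n*((n:ℝ)-1)/2))) * x^n :=
          mul_le_mul_of_nonneg_right (hd n) (by positivity)
      _ = K * (c*x)^n * Real.exp (-(a*n*((n:ℝ)-1)/2)) := by rw [mul_pow]; ring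
  have h2 : K * (c*x)^n * Real.exp (-(a*n*((n:ℝ)-1)/2)) ≤
      K * z^n * Real.exp (-(a*n*((n:ℝ)-1)/2)) := by
    have hp := pow_le_pow_left₀ (by positivity) hcx n
    have he : (0:ℝ) ≤ Real.exp (-(a*n*((n:ℝ)-1)/2)) := (Real.exp_pos _).le
    exact mul_le_mul_of_nonneg_right (mul_le_mul_of_nonneg_left hp hK) he
  have hzn : z^n = Real.exp ((n:ℝ) * Real.log z) := by
    conv_lhs => rw [← Real.exp_log hz]
    rw [← Real.exp_nat_mul]
  have hQ : Real.exp ((n:ℝ) * Real.log z) * Real.exp (-(a*n*((n:ℝ)-1)/2)) ≤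
      Real.exp ((Real.log z + 1 + a/2)^2/(2*a)) * Real.exp (-(n:ℝ)) := by
    rw [← Real.exp_add, ← Real.exp_add]
    refine Real.exp_le_exp.2 ?_
    have := key_term a (Real.log z) ha n
    linarith
  have h3 : K * z^n * Real.exp (-(a*n*((n:ℝ)-1)/2)) ≤
      K * Real.exp ((Real.log z + 1 + a/2)^2/(2*a)) * Real.exp (-(n:ℝ)) := by
    calc K * z^n * Real.exp (-(a*n*((n:ℝ)-1)/2))
        = K * (Real.exp ((n:ℝ) * Real.log z) * Real.exp (-(a*n*((n:ℝ)-1)/2))) := by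
          rw [hzn]; ring
      _ ≤ K * (Real.exp ((Real.log z + 1 + a/2)^2/(2*a)) * Real.exp (-(n:ℝ))) :=
          mul_le_mul_of_nonneg_left hQ hK
      _ = K * Real.exp ((Real.log z + 1 + a/2)^2/(2*a)) * Real.exp (-(n:ℝ)) := by ring
  linarith

lemma fact_rpow_le (α δ : ℝ) (hδ : 0 < δ) :
    ∃ c : ℝ, 0 < c ∧ ∀ n : ℕ, ((n.factorial : ℝ)) ^ α ≤ c^n * Real.exp (δ*n*((n:ℝ)-1)/2) := by
  have hnn : ∀ n : ℕ, (0:ℝ) ≤ δ*n*((n:ℝ)-1)/2 := by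
    intro n
    rcases Nat.eq_zero_or_pos n with h | h
    · simp [h]
    · have : (1:ℝ) ≤ n := by exact_mod_cast h
      have : (0:ℝ) ≤ (n:ℝ)-1 := by linarith
      positivity
  rcases le_or_gt α 0 with hα | hα
  · refine ⟨1, one_pos, fun n => ?_⟩
    have h1 : ((n.factorial : ℝ)) ^ α ≤ 1 :=
      Real.rpow_le_one_of_one_le_of_nonpos (by exact_mod_cast n.factorial_pos) hα
    have h2 : (1:ℝ) ≤ Real.exp (δ*n*((n:ℝ)-1)/2) := Real.one_le_exp (hnn n)
    calc ((n.factorial : ℝ)) ^ α ≤ 1 := h1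
      _ ≤ 1^n * Real.exp (δ*n*((n:ℝ)-1)/2) := by simpa using h2
  · set ε := δ/(2*α) with hε
    have hε0 : 0 < ε := by positivity
    refine ⟨Real.exp (δ/2 - α * Real.log ε), Real.exp_pos _, fun n => ?_⟩
    rcases Nat.eq_zero_or_pos n with h0 | h0
    · simp [h0]
    have hn1 : (1:ℝ) ≤ (n:ℝ) := by exact_mod_cast h0
    have hnpos : (0:ℝ) < n := by linarith
    -- log n ≤ ε n - log ε
    have hlogn : Real.log n ≤ ε * n - Real.log ε := by
      have h1 : ε * n ≤ Real.exp (ε * n) := by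
        have := Real.add_one_le_exp (ε * n); linarith
      have h2 : (n:ℝ) ≤ ε⁻¹ * Real.exp (ε * n) := by
        rw [le_inv_mul_iff₀ hε0]; linarith [mul_comm ε (n:ℝ)]
      have h3 := Real.log_le_log hnpos h2
      rw [Real.log_mul (by positivity) (Real.exp_ne_zero _), Real.log_inv,
        Real.log_exp] at h3
      linarith
    -- log n! ≤ n log n
    have hlogfact : Real.log (n.factorial : ℝ) ≤ (n:ℝ) * Real.log n := by
      have h1 : (n.factorial : ℝ) ≤ (n:ℝ)^n := by
        exact_mod_cast Nat.factorial_le_pow n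
      have := Real.log_le_log (by positivity) h1
      rwa [Real.log_pow] at this
    have hlognn : 0 ≤ Real.log n := Real.log_nonneg hn1
    -- main chain in exp form
    have hmain : α * Real.log (n.factorial : ℝ) ≤
        (n:ℝ) * (δ/2 - α * Real.log ε) + δ*n*((n:ℝ)-1)/2 := by
      have h1 : α * Real.log (n.factorial : ℝ) ≤ α * ((n:ℝ) * Real.log n) :=
        mul_le_mul_of_nonneg_left hlogfact hα.le
      have h2 : (n:ℝ) * Real.log n ≤ (n:ℝ) * (ε * n - Real.log ε) :=
        mul_le_mul_of_nonneg_left hlogn (by positivity)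
      have h3 : α * ((n:ℝ) * Real.log n) ≤ α * ((n:ℝ) * (ε * n - Real.log ε)) :=
        mul_le_mul_of_nonneg_left h2 hα.le
      have hεα : α * ε = δ/2 := by
        rw [hε]
        field_simp
      have h4 : α * ((n:ℝ) * (ε * n - Real.log ε)) =
          (n:ℝ) * (δ/2 - α * Real.log ε) + δ*n*((n:ℝ)-1)/2 := by
        linear_combination ((n:ℝ)^2) * hεα
      linarith [h1, h3]
    have hfact : ((n.factorial : ℝ)) ^ α = Real.exp (α * Real.log (n.factorial : ℝ)) := by
      rw [Real.rpow_def_of_pos (by positivity), mul_comm]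
    have hcn : (Real.exp (δ/2 - α * Real.log ε))^n = Real.exp ((n:ℝ) * (δ/2 - α * Real.log ε)) := by
      rw [← Real.exp_nat_mul]
    rw [hfact, hcn, ← Real.exp_add]
    exact Real.exp_le_exp.2 hmain

lemma rpow_pad {x h β β' : ℝ} (hh : 0 < h) (hx : 0 ≤ x) (hβ : β ≤ β') :
    (x+h)^β ≤ h^(β-β') * (x+h)^β' := by
  have hxh : 0 < x + h := by linarith
  have h1 : (x+h)^β = (x+h)^(β-β') * (x+h)^β' := by
    rw [← Real.rpow_add hxh]; ring_nf
  rw [h1]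
  exact mul_le_mul_of_nonneg_right
    (Real.rpow_le_rpow_of_nonpos hh (by linarith) (by linarith))
    (Real.rpow_nonneg hxh.le _)

lemma eventually_small {M η : ℝ} (hM : 0 < M) (hη : 0 < η) :
    ∃ N : ℕ, ∀ n : ℕ, N ≤ n → M * Real.exp (-(n:ℝ)) ≤ η := by
  refine ⟨⌈Real.log (M/η)⌉₊, fun n hn => ?_⟩
  have h1 : Real.log (M/η) ≤ (n:ℝ) := le_trans (Nat.le_ceil _) (by exact_mod_cast hn)
  have h2 : Real.exp (-(n:ℝ)) ≤ Real.exp (-Real.log (M/η)) := Real.exp_le_exp.2 (by linarith)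
  have h3 : Real.exp (-Real.log (M/η)) = η/M := by
    rw [Real.exp_neg, Real.exp_log (by positivity), inv_div]
  calc M * Real.exp (-(n:ℝ)) ≤ M * (η/M) := by
        rw [← h3]; exact mul_le_mul_of_nonneg_left h2 hM.le
    _ = η := by field_simp

lemma lower_all {f : ℕ → ℝ} (hf : ∀ n, 0 < f n) {ρ : ℝ} (hρ : 0 < ρ) :
    ∀ N : ℕ, ∀ c : ℝ, 0 < c → (∀ n : ℕ, N ≤ n → c * ρ^n ≤ f n) →
      ∃ c' : ℝ, 0 < c' ∧ ∀ n, c' * ρ^n ≤ f n := by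
  intro N
  induction N with
  | zero => exact fun c hc h => ⟨c, hc, fun n => h n (Nat.zero_le n)⟩
  | succ N ih =>
    intro c hc h
    refine ih (min c (f N / ρ^N)) (lt_min hc (div_pos (hf N) (pow_pos hρ N)))
      (fun n hn => ?_)
    rcases eq_or_lt_of_le hn with heq | hlt
    · rw [← heq]
      calc min c (f N / ρ^N) * ρ^N ≤ (f N / ρ^N) * ρ^N :=
          mul_le_mul_of_nonneg_right (min_le_right _ _) (by positivity)
        _ = f N := by field_simp
    · calc min c (f N / ρ^N) * ρ^n ≤ c * ρ^n :=
          mul_le_mul_of_nonneg_right (min_le_left _ _) (by positivity)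
        _ ≤ f n := h n hlt

lemma bounded_of_summable {f : ℕ → ℂ} (hf : Summable f) :
    ∃ C : ℝ, 0 < C ∧ ∀ n, ‖f n‖ ≤ C := by
  have hn : Summable (fun n => ‖f n‖) := summable_norm_iff.2 hf
  refine ⟨(∑' n, ‖f n‖) + 1, ?_, fun n => ?_⟩
  · have : 0 ≤ ∑' n, ‖f n‖ := tsum_nonneg (fun n => norm_nonneg (f n)); linarith
  · have := Summable.le_tsum hn n (fun j _ => norm_nonneg _)
    linarith

lemma norm_term (d : ℕ → ℝ) (t : ℂ) (n : ℕ) : ‖(d n : ℂ) * t^n‖ = |d n| * ‖t‖^n := by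
  rw [norm_mul, norm_pow, Complex.norm_real, Real.norm_eq_abs]

lemma entire_summable {d : ℕ → ℝ} {K c a : ℝ} (ha : 0 < a) (hc : 0 < c)
    (hd : ∀ n, |d n| ≤ K * c^n * Real.exp (-(a*n*((n:ℝ)-1)/2))) (t : ℂ) :
    Summable (fun n : ℕ => ‖(d n : ℂ) * t^n‖) := by
  refine Summable.of_nonneg_of_le (fun n => norm_nonneg _)
    (fun n => ?_) ((exp_neg_summable.mul_left
      (K * Real.exp ((Real.log (c*(‖t‖+1)) + 1 + a/2)^2/(2*a)))))
  rw [norm_term]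
  exact core_bound ha hc hd (norm_nonneg t) (by positivity)
    (by nlinarith [norm_nonneg t]) n

lemma entire_diff {d : ℕ → ℝ} {K c a : ℝ} (ha : 0 < a) (hc : 0 < c)
    (hd : ∀ n, |d n| ≤ K * c^n * Real.exp (-(a*n*((n:ℝ)-1)/2))) :
    Differentiable ℂ (fun t : ℂ => ∑' n : ℕ, (d n : ℂ) * t^n) := by
  intro t₀
  have hR : (0:ℝ) < ‖t₀‖ + 1 := by positivity
  set R := ‖t₀‖ + 1 with hRdef
  have hdo : DifferentiableOn ℂ (fun t : ℂ => ∑' n : ℕ, (d n : ℂ) * t^n)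
      (Metric.ball 0 R) := by
    refine Complex.differentiableOn_tsum_of_summable_norm
      (u := fun n => K * Real.exp ((Real.log (c*(R+1)) + 1 + a/2)^2/(2*a)) * Real.exp (-(n:ℝ)))
      ((exp_neg_summable.mul_left _)) (fun n => (differentiable_const _ |>.mul
        (differentiable_pow n)).differentiableOn) Metric.isOpen_ball (fun n w hw => ?_)
    rw [norm_term]
    have hwR : ‖w‖ ≤ R := by
      have := mem_ball_zero_iff.1 hw; linarith
    exact core_bound ha hc hd (norm_nonneg w) (by positivity)
      (by nlinarith [norm_nonneg w]) n
  have ht₀ : t₀ ∈ Metric.ball (0:ℂ) R := by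
    rw [mem_ball_zero_iff]; simp [hRdef]
  exact hdo.differentiableAt (Metric.isOpen_ball.mem_nhds ht₀)

-- the growth bound
lemma entire_growth {d : ℕ → ℝ} {K c a : ℝ} (ha : 0 < a) (hc : 0 < c)
    (hd : ∀ n, |d n| ≤ K * c^n * Real.exp (-(a*n*((n:ℝ)-1)/2)))
    {h : ℝ} (hh : 0 < h) :
    ∃ C β : ℝ, 0 < C ∧ ∀ t : ℂ,
      ‖∑' n : ℕ, (d n : ℂ) * t^n‖ ≤
        C * Real.exp ((Real.log (‖t‖+h))^2/(2*a)) * (‖t‖+h) ^ β := by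
  have hK : 0 ≤ K := by
    have h0 := hd 0; simp at h0
    exact le_trans (abs_nonneg _) h0
  set w := Real.log c + 1 + a/2 with hw
  set S := ∑' n : ℕ, Real.exp (-(n:ℝ)) with hS
  have hS1 : 1 ≤ S := by
    have := Summable.le_tsum exp_neg_summable 0 (fun n _ => (Real.exp_pos _).le)
    simpa using this
  refine ⟨(K+1) * S * Real.exp (w^2/(2*a)), w/a, by positivity, fun t => ?_⟩
  set x := ‖t‖ with hx
  have hx0 : 0 ≤ x := norm_nonneg t
  have hxh : 0 < x + h := by linarith
  set L := Real.log (x+h) with hL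
  -- termwise bound with z = c*(x+h)
  have hterm : ∀ n : ℕ, ‖(d n:ℂ) * t^n‖ ≤
      K * Real.exp ((Real.log (c*(x+h)) + 1 + a/2)^2/(2*a)) * Real.exp (-(n:ℝ)) := by
    intro n
    rw [norm_term]
    exact core_bound ha hc hd hx0 (by positivity) (by nlinarith) n
  have h1 : ‖∑' n : ℕ, (d n : ℂ) * t^n‖ ≤
      K * Real.exp ((Real.log (c*(x+h)) + 1 + a/2)^2/(2*a)) * S := by
    calc ‖∑' n : ℕ, (d n : ℂ) * t^n‖ ≤ ∑' n : ℕ, ‖(d n : ℂ) * t^n‖ :=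
          norm_tsum_le_tsum_norm (entire_summable ha hc hd t)
      _ ≤ ∑' n : ℕ, K * Real.exp ((Real.log (c*(x+h)) + 1 + a/2)^2/(2*a)) * Real.exp (-(n:ℝ)) :=
          Summable.tsum_le_tsum hterm (entire_summable ha hc hd t) (exp_neg_summable.mul_left _)
      _ = K * Real.exp ((Real.log (c*(x+h)) + 1 + a/2)^2/(2*a)) * S := by
          rw [tsum_mul_left]
  -- expand the exponent
  have hlog : Real.log (c*(x+h)) + 1 + a/2 = w + L := by
    rw [Real.log_mul (ne_of_gt hc) (ne_of_gt hxh)]; ring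
  have hexp : Real.exp ((Real.log (c*(x+h)) + 1 + a/2)^2/(2*a)) =
      Real.exp (w^2/(2*a)) * Real.exp (L^2/(2*a)) * (x+h)^(w/a) := by
    rw [hlog, Real.rpow_def_of_pos hxh, ← Real.exp_add, ← Real.exp_add]
    congr 1
    field_simp
    ring
  rw [hexp] at h1
  calc ‖∑' n : ℕ, (d n : ℂ) * t^n‖
      ≤ K * (Real.exp (w^2/(2*a)) * Real.exp (L^2/(2*a)) * (x+h)^(w/a)) * S := h1
    _ = K * (S * (Real.exp (w^2/(2*a)) * Real.exp (L^2/(2*a)) * (x+h)^(w/a))) := by ring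
    _ ≤ (K+1) * (S * (Real.exp (w^2/(2*a)) * Real.exp (L^2/(2*a)) * (x+h)^(w/a))) := by
        have hrp : (0:ℝ) ≤ (x+h)^(w/a) := Real.rpow_nonneg hxh.le _
        have hS0 : (0:ℝ) ≤ S := by linarith
        refine mul_le_mul_of_nonneg_right (by linarith) ?_
        have := (Real.exp_pos (w^2/(2*a))).le
        have := (Real.exp_pos (L^2/(2*a))).le
        positivity
    _ = (K+1) * S * Real.exp (w^2/(2*a)) * Real.exp (L^2/(2*a)) * (x+h)^(w/a) := by ring


end QGevreyAux

open QGevreyAux in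
/-- If `m̃` preserves `q`-Gevrey asymptotic expansions and for every `s > 0`
one has `|m(n) - m̃(n)| ≤ A_s B_s^n (n!)^{α_s} q^{-s n(n-1)/2}`, then `m` also preserves
`q`-Gevrey asymptotic expansions. -/
theorem close_to_qGevrey_preserving_preserves_qGevrey
    (q : ℝ) (hq : 1 < q)
    (mt m : ℕ → ℝ) (hmt_pos : ∀ n, 0 < mt n) (hmt0 : mt 0 = 1)
    (hm_pos : ∀ n, 0 < m n) (hm0 : m 0 = 1)
    (hmt : PreservesQGevrey q mt)
    (hclose : ∀ s : ℝ, 0 < s → ∃ A : ℝ, 0 < A ∧ ∃ B : ℝ, 0 < B ∧ ∃ α : ℝ, ∀ n : ℕ,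
      |m n - mt n| ≤ A * B ^ n * (n.factorial : ℝ) ^ α *
        q ^ (-(s * (n : ℝ) * ((n : ℝ) - 1) / 2))) :
    PreservesQGevrey q m := by
  have hq0 : (0:ℝ) < q := by linarith
  have hlq : 0 < Real.log q := Real.log_pos hq
  have hdiff : ∀ s : ℝ, 0 < s → ∃ K c : ℝ, 0 < K ∧ 0 < c ∧ ∀ n : ℕ,
      |m n - mt n| ≤ K * c^n * Real.exp (-((s*Real.log q)*n*((n:ℝ)-1)/2)) := by
    intro s hs
    obtain ⟨A, hA, B, hB, α, hABα⟩ := hclose (2*s) (by linarith)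
    obtain ⟨c₁, hc₁, hfac⟩ := fact_rpow_le α (s*Real.log q) (by positivity)
    refine ⟨A, B*c₁, hA, by positivity, fun n => ?_⟩
    have hqrw : q ^ (-(2*s*(n:ℝ)*((n:ℝ)-1)/2)) =
        Real.exp (-((2*s*Real.log q)*n*((n:ℝ)-1)/2)) := by
      rw [Real.rpow_def_of_pos hq0]
      congr 1
      ring
    have h1 := hABα n
    rw [hqrw] at h1
    have h2 := hfac n
    have hE : Real.exp ((s*Real.log q)*n*((n:ℝ)-1)/2) *
        Real.exp (-((2*s*Real.log q)*n*((n:ℝ)-1)/2)) =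
        Real.exp (-((s*Real.log q)*n*((n:ℝ)-1)/2)) := by
      rw [← Real.exp_add]
      congr 1
      ring
    calc |m n - mt n|
        ≤ A*B^n*(n.factorial:ℝ)^α * Real.exp (-((2*s*Real.log q)*n*((n:ℝ)-1)/2)) := h1
      _ ≤ A*B^n*(c₁^n * Real.exp ((s*Real.log q)*n*((n:ℝ)-1)/2)) *
          Real.exp (-((2*s*Real.log q)*n*((n:ℝ)-1)/2)) := by
          exact mul_le_mul_of_nonneg_right (mul_le_mul_of_nonneg_left h2 (by positivity))
            (Real.exp_pos _).le
      _ = A*(B*c₁)^n * (Real.exp ((s*Real.log q)*n*((n:ℝ)-1)/2) *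
          Real.exp (-((2*s*Real.log q)*n*((n:ℝ)-1)/2))) := by rw [mul_pow]; ring
      _ = A*(B*c₁)^n * Real.exp (-((s*Real.log q)*n*((n:ℝ)-1)/2)) := by rw [hE]
  obtain ⟨R₁, hR₁, hsum1⟩ := hmt.1
  obtain ⟨R₂, hR₂, hsum2⟩ := hmt.2.1
  set ρ₃ : ℝ := R₁/2 with hρ₃def
  have hρ₃ : 0 < ρ₃ := by rw [hρ₃def]; positivity
  -- lower bound for mt
  have hmtlow : ∃ c₂ : ℝ, 0 < c₂ ∧ ∀ n, c₂ * ρ₃^n ≤ mt n := by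
    have hmem : ‖((ρ₃ : ℝ) : ℂ)‖ < R₁ := by
      rw [Complex.norm_real, Real.norm_eq_abs, abs_of_pos hρ₃, hρ₃def]
      linarith
    obtain ⟨C, hC, hCb⟩ := bounded_of_summable (hsum1 ((ρ₃ : ℝ) : ℂ) hmem)
    refine ⟨1/C, by positivity, fun n => ?_⟩
    have hb := hCb n
    have hnorm : ‖((ρ₃:ℝ):ℂ)^n / (mt n : ℂ)‖ = ρ₃^n / mt n := by
      rw [norm_div, norm_pow, Complex.norm_real, Complex.norm_real, Real.norm_eq_abs,
        Real.norm_eq_abs, abs_of_pos hρ₃, abs_of_pos (hmt_pos n)]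
    rw [hnorm, div_le_iff₀ (hmt_pos n)] at hb
    have heq2 : 1/C*(C*mt n) = mt n := by field_simp
    nlinarith [mul_le_mul_of_nonneg_left hb (by positivity : (0:ℝ) ≤ 1/C)]
  obtain ⟨c₂, hc₂, hmtl⟩ := hmtlow
  -- lower bound for m
  have hmlow : ∃ c₃ : ℝ, 0 < c₃ ∧ ∀ n, c₃ * ρ₃^n ≤ m n := by
    obtain ⟨K₀, c₀, hK₀, hc₀, hd₀⟩ := hdiff 1 one_pos
    have ha₀ : 0 < 1*Real.log q := by linarith
    have hx₀ : (0:ℝ) < 1/ρ₃ := by positivity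
    obtain ⟨N, hN⟩ := eventually_small
      (show 0 < K₀ * Real.exp ((Real.log (c₀*(1/ρ₃+1)) + 1 + (1*Real.log q)/2)^2
        /(2*(1*Real.log q))) by positivity)
      (show 0 < c₂/2 by linarith)
    have hstep : ∀ n : ℕ, N ≤ n → (c₂/2) * ρ₃^n ≤ m n := by
      intro n hn
      have h1 : |m n - mt n| * (1/ρ₃)^n ≤
          K₀ * Real.exp ((Real.log (c₀*(1/ρ₃+1)) + 1 + (1*Real.log q)/2)^2
            /(2*(1*Real.log q))) * Real.exp (-(n:ℝ)) :=
        core_bound ha₀ hc₀ hd₀ hx₀.le (by positivity) (by nlinarith) n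
      have h3 : |m n - mt n| * (1/ρ₃)^n ≤ c₂/2 := le_trans h1 (hN n hn)
      have hxρ : (1/ρ₃)^n * ρ₃^n = 1 := by
        rw [← mul_pow]
        field_simp
        exact one_pow n
      have h4 : |m n - mt n| ≤ (c₂/2) * ρ₃^n := by
        have h5 := mul_le_mul_of_nonneg_right h3 (le_of_lt (pow_pos hρ₃ n))
        calc |m n - mt n| = |m n - mt n| * ((1/ρ₃)^n * ρ₃^n) := by rw [hxρ, mul_one]
          _ = |m n - mt n| * (1/ρ₃)^n * ρ₃^n := by ring
          _ ≤ (c₂/2) * ρ₃^n := h5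
      have h6 := hmtl n
      have h7 := neg_abs_le (m n - mt n)
      linarith
    exact lower_all hm_pos hρ₃ N (c₂/2) (by linarith) hstep
  obtain ⟨c₃, hc₃, hml⟩ := hmlow
  obtain ⟨ρ, hρ, hmtl', hml'⟩ : ∃ ρ : ℝ, 0 < ρ ∧ (∀ n, c₂*ρ^n ≤ mt n) ∧
      (∀ n, c₃*ρ^n ≤ m n) := ⟨ρ₃, hρ₃, hmtl, hml⟩
  -- upper bound for mt
  have hmtup : ∃ Cu : ℝ, 0 < Cu ∧ ∀ n, mt n ≤ Cu * (2/R₂)^n := by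
    have hmem : ‖(((R₂/2:ℝ)) : ℂ)‖ < R₂ := by
      rw [Complex.norm_real, Real.norm_eq_abs, abs_of_pos (by positivity)]
      linarith
    obtain ⟨C, hC, hCb⟩ := bounded_of_summable (hsum2 (((R₂/2:ℝ)) : ℂ) hmem)
    refine ⟨C, hC, fun n => ?_⟩
    have hb := hCb n
    have hnorm : ‖(mt n : ℂ) * ((R₂/2:ℝ):ℂ)^n‖ = mt n * (R₂/2)^n := by
      rw [norm_mul, norm_pow, Complex.norm_real, Complex.norm_real, Real.norm_eq_abs,
        Real.norm_eq_abs, abs_of_pos (hmt_pos n), abs_of_pos (by positivity : (0:ℝ) < R₂/2)]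
    rw [hnorm] at hb
    have hpow : (R₂/2)^n * (2/R₂)^n = 1 := by
      rw [← mul_pow]
      field_simp
      exact one_pow n
    calc mt n = mt n * ((R₂/2)^n * (2/R₂)^n) := by rw [hpow, mul_one]
      _ = (mt n * (R₂/2)^n) * (2/R₂)^n := by ring
      _ ≤ C * (2/R₂)^n := mul_le_mul_of_nonneg_right hb (by positivity)
  obtain ⟨Cu, hCu, hmtu⟩ := hmtup
  obtain ⟨K₁, c₁, hK₁, hc₁, hd₁⟩ := hdiff 1 one_pos
  have hquad : ∀ (δ : ℝ), 0 ≤ δ → ∀ n : ℕ, (0:ℝ) ≤ δ*n*((n:ℝ)-1)/2 := by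
    intro δ hδ n
    rcases Nat.eq_zero_or_pos n with h | h
    · simp [h]
    · have h1 : (1:ℝ) ≤ n := by exact_mod_cast h
      have h2 : (0:ℝ) ≤ (n:ℝ)-1 := by linarith
      positivity
  -- upper bound for m
  have hmu : ∀ n, m n ≤ (Cu + K₁) * (max (2/R₂) c₁)^n := by
    intro n
    have h1 : |m n - mt n| ≤ K₁ * c₁^n := by
      have h2 := hd₁ n
      have h3 : Real.exp (-((1*Real.log q)*n*((n:ℝ)-1)/2)) ≤ 1 := by
        rw [Real.exp_le_one_iff]
        have := hquad (1*Real.log q) (by linarith) n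
        linarith
      calc |m n - mt n| ≤ K₁ * c₁^n * Real.exp (-((1*Real.log q)*n*((n:ℝ)-1)/2)) := h2
        _ ≤ K₁ * c₁^n := mul_le_of_le_one_right (by positivity) h3
    have h4 : (2/R₂)^n ≤ (max (2/R₂) c₁)^n :=
      pow_le_pow_left₀ (by positivity) (le_max_left _ _) n
    have h5 : c₁^n ≤ (max (2/R₂) c₁)^n :=
      pow_le_pow_left₀ hc₁.le (le_max_right _ _) n
    have h6 := hmtu n
    have h7 := le_abs_self (m n - mt n)
    have h8 := mul_le_mul_of_nonneg_left h4 hCu.le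
    have h9 := mul_le_mul_of_nonneg_left h5 hK₁.le
    nlinarith
  have hρu0 : (0:ℝ) < max (2/R₂) c₁ := lt_of_lt_of_le hc₁ (le_max_right _ _)
  refine ⟨⟨ρ, hρ, fun t ht => ?_⟩, ⟨1/(max (2/R₂) c₁), by positivity, fun t ht => ?_⟩, ?_⟩
  · -- Summable t^n / m n
    refine Summable.of_norm ?_
    refine Summable.of_nonneg_of_le (fun n => norm_nonneg _) (fun n => ?_)
      (((summable_geometric_of_lt_one (r := ‖t‖/ρ) (by positivity) (by
        rw [div_lt_one hρ]; exact ht)).mul_left (1/c₃)))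
    have hnorm : ‖t^n / (m n : ℂ)‖ = ‖t‖^n / m n := by
      rw [norm_div, norm_pow, Complex.norm_real, Real.norm_eq_abs, abs_of_pos (hm_pos n)]
    rw [hnorm]
    have h1 : ‖t‖^n / m n ≤ ‖t‖^n / (c₃ * ρ^n) :=
      div_le_div_of_nonneg_left (by positivity) (by positivity) (hml' n)
    calc ‖t‖^n / m n ≤ ‖t‖^n / (c₃ * ρ^n) := h1
      _ = 1/c₃ * (‖t‖/ρ)^n := by
          rw [div_pow]
          field_simp
  · -- Summable m n * t^n
    refine Summable.of_norm ?_
    refine Summable.of_nonneg_of_le (fun n => norm_nonneg _) (fun n => ?_)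
      (((summable_geometric_of_lt_one (r := max (2/R₂) c₁ * ‖t‖) (by positivity) (by
        have h0 : ‖t‖ < 1/(max (2/R₂) c₁) := ht
        calc max (2/R₂) c₁ * ‖t‖ < max (2/R₂) c₁ * (1/(max (2/R₂) c₁)) :=
              mul_lt_mul_of_pos_left h0 hρu0
          _ = 1 := by field_simp)).mul_left (Cu + K₁)))
    have hnorm : ‖(m n : ℂ) * t^n‖ = m n * ‖t‖^n := by
      rw [norm_mul, norm_pow, Complex.norm_real, Real.norm_eq_abs, abs_of_pos (hm_pos n)]
    rw [hnorm]
    calc m n * ‖t‖^n ≤ ((Cu + K₁) * (max (2/R₂) c₁)^n) * ‖t‖^n :=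
          mul_le_mul_of_nonneg_right (hmu n) (by positivity)
      _ = (Cu + K₁) * (max (2/R₂) c₁ * ‖t‖)^n := by rw [mul_pow]; ring
  · intro s hs θ hθ
    obtain ⟨α, hα, U, hU, hUsub, Ft, Gt, hFt, hGt, ⟨ε, hε, hball, heq⟩, C, h, hC, hh, β, hbd⟩ :=
      hmt.2.2 s hs θ hθ
    obtain ⟨K, c, hK, hc, hdK⟩ := hdiff s hs
    have ha : 0 < s * Real.log q := by positivity
    set d : ℕ → ℝ := fun n => m n - mt n with hd_def
    set e : ℕ → ℝ := fun n => 1/m n - 1/mt n with he_def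
    have hdb : ∀ n, |d n| ≤ K * c^n * Real.exp (-((s*Real.log q)*n*((n:ℝ)-1)/2)) := hdK
    have heb : ∀ n, |e n| ≤ (K/(c₃*c₂)) * (c/(ρ*ρ))^n *
        Real.exp (-((s*Real.log q)*n*((n:ℝ)-1)/2)) := by
      intro n
      have hmn := hm_pos n
      have hmtn := hmt_pos n
      have he1 : e n = (mt n - m n)/(m n * mt n) := by
        simp only [he_def]
        field_simp
      have he2 : |e n| = |d n| / (m n * mt n) := by
        rw [he1, abs_div, abs_of_pos (mul_pos hmn hmtn), abs_sub_comm]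
      rw [he2]
      have hden : (c₃*ρ^n) * (c₂*ρ^n) ≤ m n * mt n :=
        mul_le_mul (hml' n) (hmtl' n) (by positivity)
          (le_trans (by positivity) (hml' n))
      have h1 : |d n| / (m n * mt n) ≤
          (K * c^n * Real.exp (-((s*Real.log q)*n*((n:ℝ)-1)/2))) / ((c₃*ρ^n) * (c₂*ρ^n)) :=
        div_le_div₀ (by positivity) (hdb n) (by positivity) hden
      calc |d n| / (m n * mt n)
          ≤ (K * c^n * Real.exp (-((s*Real.log q)*n*((n:ℝ)-1)/2))) /
            ((c₃*ρ^n) * (c₂*ρ^n)) := h1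
        _ = (K/(c₃*c₂)) * (c/(ρ*ρ))^n *
            Real.exp (-((s*Real.log q)*n*((n:ℝ)-1)/2)) := by
            rw [div_pow]
            rw [mul_pow]
            field_simp
    have hcE : (0:ℝ) < c/(ρ*ρ) := by positivity
    have hEdiff := entire_diff ha hcE heb
    have hDdiff := entire_diff ha hc hdb
    obtain ⟨CE, βE, hCE, hbdE⟩ := entire_growth ha hcE heb hh
    obtain ⟨CD, βD, hCD, hbdD⟩ := entire_growth ha hc hdb hh
    have hconv : 2*(s*Real.log q) = 2*s*Real.log q := by ring
    refine ⟨α, hα, U, hU, hUsub,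
      (fun t => Ft t + ∑' n : ℕ, ((e n : ℝ) : ℂ) * t^n),
      (fun t => Gt t + ∑' n : ℕ, ((d n : ℝ) : ℂ) * t^n),
      hFt.add hEdiff.differentiableOn, hGt.add hDdiff.differentiableOn,
      ⟨min ε (min R₁ R₂), lt_min hε (lt_min hR₁ hR₂),
        subset_trans (Metric.ball_subset_ball (min_le_left _ _)) hball,
        fun t ht' => ?_⟩, ?_⟩
    · have ht1 : ‖t‖ < ε := lt_of_lt_of_le ht' (min_le_left _ _)
      have ht2 : ‖t‖ < R₁ :=
        lt_of_lt_of_le ht' (le_trans (min_le_right _ _) (min_le_left _ _))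
      have ht3 : ‖t‖ < R₂ :=
        lt_of_lt_of_le ht' (le_trans (min_le_right _ _) (min_le_right _ _))
      have hsume : Summable (fun n : ℕ => ((e n : ℝ) : ℂ) * t^n) :=
        Summable.of_norm (entire_summable ha hcE heb t)
      have hsumd : Summable (fun n : ℕ => ((d n : ℝ) : ℂ) * t^n) :=
        Summable.of_norm (entire_summable ha hc hdb t)
      constructor
      · show Ft t + (∑' n : ℕ, ((e n : ℝ) : ℂ) * t^n) = ∑' n : ℕ, t ^ n / (m n : ℂ)
        rw [(heq t ht1).1, ← Summable.tsum_add (hsum1 t ht2) hsume]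
        apply tsum_congr
        intro n
        have h1 : (m n : ℂ) ≠ 0 := by
          exact_mod_cast (hm_pos n).ne'
        have h2 : (mt n : ℂ) ≠ 0 := by
          exact_mod_cast (hmt_pos n).ne'
        simp only [he_def]
        push_cast
        field_simp
        ring
      · show Gt t + (∑' n : ℕ, ((d n : ℝ) : ℂ) * t^n) = ∑' n : ℕ, (m n : ℂ) * t ^ n
        rw [(heq t ht1).2, ← Summable.tsum_add (hsum2 t ht3) hsumd]
        apply tsum_congr
        intro n
        simp only [hd_def]
        push_cast
        ring
    · refine ⟨C*(h^(β - max β (max βD βE))) + CD*(h^(βD - max β (max βD βE)))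
        + CE*(h^(βE - max β (max βD βE))), h, by positivity, hh,
        max β (max βD βE), fun t htS => ?_⟩
      obtain ⟨hbF, hbG⟩ := hbd t htS
      have hbE := hbdE t
      have hbD := hbdD t
      rw [hconv] at hbE hbD
      have hxh : (0:ℝ) < ‖t‖ + h := by positivity
      have hEex : (0:ℝ) < Real.exp ((Real.log (‖t‖+h))^2/(2*s*Real.log q)) := Real.exp_pos _
      have hβ1 : β ≤ max β (max βD βE) := le_max_left _ _
      have hβ2 : βD ≤ max β (max βD βE) := le_trans (le_max_left _ _) (le_max_right _ _)
      have hβ3 : βE ≤ max β (max βD βE) := le_trans (le_max_right _ _) (le_max_right _ _)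
      have hP : (0:ℝ) ≤ (‖t‖+h)^(max β (max βD βE)) := Real.rpow_nonneg hxh.le _
      have pad1 := rpow_pad (x := ‖t‖) hh (norm_nonneg t) hβ1
      have pad2 := rpow_pad (x := ‖t‖) hh (norm_nonneg t) hβ2
      have pad3 := rpow_pad (x := ‖t‖) hh (norm_nonneg t) hβ3
      have p1 : ‖Ft t‖ ≤
          C*(h^(β - max β (max βD βE))) *
          Real.exp ((Real.log (‖t‖+h))^2/(2*s*Real.log q)) *
          (‖t‖+h)^(max β (max βD βE)) := by
        calc ‖Ft t‖
            ≤ C * Real.exp ((Real.log (‖t‖+h))^2/(2*s*Real.log q)) * (‖t‖+h)^β := hbF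
          _ ≤ C * Real.exp ((Real.log (‖t‖+h))^2/(2*s*Real.log q)) *
              (h^(β - max β (max βD βE)) * (‖t‖+h)^(max β (max βD βE))) :=
              mul_le_mul_of_nonneg_left pad1 (by positivity)
          _ = C*(h^(β - max β (max βD βE))) *
              Real.exp ((Real.log (‖t‖+h))^2/(2*s*Real.log q)) *
              (‖t‖+h)^(max β (max βD βE)) := by ring
      have p1' : ‖Gt t‖ ≤
          C*(h^(β - max β (max βD βE))) *
          Real.exp ((Real.log (‖t‖+h))^2/(2*s*Real.log q)) *
          (‖t‖+h)^(max β (max βD βE)) := by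
        calc ‖Gt t‖
            ≤ C * Real.exp ((Real.log (‖t‖+h))^2/(2*s*Real.log q)) * (‖t‖+h)^β := hbG
          _ ≤ C * Real.exp ((Real.log (‖t‖+h))^2/(2*s*Real.log q)) *
              (h^(β - max β (max βD βE)) * (‖t‖+h)^(max β (max βD βE))) :=
              mul_le_mul_of_nonneg_left pad1 (by positivity)
          _ = _ := by ring
      have p2 : ‖∑' n : ℕ, ((d n : ℝ) : ℂ) * t^n‖ ≤
          CD*(h^(βD - max β (max βD βE))) *
          Real.exp ((Real.log (‖t‖+h))^2/(2*s*Real.log q)) *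
          (‖t‖+h)^(max β (max βD βE)) := by
        calc ‖∑' n : ℕ, ((d n : ℝ) : ℂ) * t^n‖
            ≤ CD * Real.exp ((Real.log (‖t‖+h))^2/(2*s*Real.log q)) * (‖t‖+h)^βD := hbD
          _ ≤ CD * Real.exp ((Real.log (‖t‖+h))^2/(2*s*Real.log q)) *
              (h^(βD - max β (max βD βE)) * (‖t‖+h)^(max β (max βD βE))) :=
              mul_le_mul_of_nonneg_left pad2 (by positivity)
          _ = _ := by ring
      have p3 : ‖∑' n : ℕ, ((e n : ℝ) : ℂ) * t^n‖ ≤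
          CE*(h^(βE - max β (max βD βE))) *
          Real.exp ((Real.log (‖t‖+h))^2/(2*s*Real.log q)) *
          (‖t‖+h)^(max β (max βD βE)) := by
        calc ‖∑' n : ℕ, ((e n : ℝ) : ℂ) * t^n‖
            ≤ CE * Real.exp ((Real.log (‖t‖+h))^2/(2*s*Real.log q)) * (‖t‖+h)^βE := hbE
          _ ≤ CE * Real.exp ((Real.log (‖t‖+h))^2/(2*s*Real.log q)) *
              (h^(βE - max β (max βD βE)) * (‖t‖+h)^(max β (max βD βE))) :=
              mul_le_mul_of_nonneg_left pad3 (by positivity)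
          _ = _ := by ring
      have hnn2 : (0:ℝ) ≤ CD*(h^(βD - max β (max βD βE))) *
          Real.exp ((Real.log (‖t‖+h))^2/(2*s*Real.log q)) *
          (‖t‖+h)^(max β (max βD βE)) := by positivity
      have hnn3 : (0:ℝ) ≤ CE*(h^(βE - max β (max βD βE))) *
          Real.exp ((Real.log (‖t‖+h))^2/(2*s*Real.log q)) *
          (‖t‖+h)^(max β (max βD βE)) := by positivity
      have htri1 : ‖Ft t + ∑' n : ℕ, ((e n : ℝ) : ℂ) * t^n‖ ≤
          ‖Ft t‖ + ‖∑' n : ℕ, ((e n : ℝ) : ℂ) * t^n‖ := by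
        exact norm_add_le _ _
      have htri2 : ‖Gt t + ∑' n : ℕ, ((d n : ℝ) : ℂ) * t^n‖ ≤
          ‖Gt t‖ + ‖∑' n : ℕ, ((d n : ℝ) : ℂ) * t^n‖ := by
        exact norm_add_le _ _
      have hexpand : (C*(h^(β - max β (max βD βE))) + CD*(h^(βD - max β (max βD βE)))
          + CE*(h^(βE - max β (max βD βE)))) *
          Real.exp ((Real.log (‖t‖+h))^2/(2*s*Real.log q)) *
          (‖t‖+h)^(max β (max βD βE)) =
          C*(h^(β - max β (max βD βE))) *
            Real.exp ((Real.log (‖t‖+h))^2/(2*s*Real.log q)) *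
            (‖t‖+h)^(max β (max βD βE)) +
          CD*(h^(βD - max β (max βD βE))) *
            Real.exp ((Real.log (‖t‖+h))^2/(2*s*Real.log q)) *
            (‖t‖+h)^(max β (max βD βE)) +
          CE*(h^(βE - max β (max βD βE))) *
            Real.exp ((Real.log (‖t‖+h))^2/(2*s*Real.log q)) *
            (‖t‖+h)^(max β (max βD βE)) := by ring
      constructor
      · show ‖Ft t + ∑' n : ℕ, ((e n : ℝ) : ℂ) * t^n‖ ≤ _
        rw [hexpand]
        linarith
      · show ‖Gt t + ∑' n : ℕ, ((d n : ℝ) : ℂ) * t^n‖ ≤ _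
        rw [hexpand]
        linarith
end
end

section
/- Fix q > 1. Every sequence m : ℕ → (0,∞) with m(0) = 1 that preserves q-Gevrey asymptotic expansions also preserves summability. -/
open Complex MeasureTheory

noncomputable section

set_option maxHeartbeats 1000000 in
lemma growth_bound (c h β k : ℝ) (hc : 0 < c) (hh : 0 < h) (hk : 0 < k) :
    ∃ A B : ℝ, 0 < A ∧ 0 < B ∧ ∀ x : ℝ, 0 ≤ x →
      Real.exp ((Real.log (x + h)) ^ 2 / c) * (x + h) ^ β ≤ A * Real.exp (B * x ^ k) := by
  set E : ℝ := 2 * (Real.log h) ^ 2 + (8 / k ^ 2) * 2 ^ k with hE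
  set D : ℝ := (8 / k ^ 2) * (2 / h) ^ k with hD
  have hE0 : 0 ≤ E := by positivity
  have hD0 : 0 ≤ D := by positivity
  refine ⟨Real.exp (E / c + |β| / 2 + |β| * E / 2), D / c + |β| * D / 2 + 1, Real.exp_pos _,
    by positivity, fun x hx => ?_⟩
  have hy : 0 < x + h := by linarith
  set u : ℝ := 1 + x / h with hu
  have hu1 : (1 : ℝ) ≤ u := by
    have : 0 ≤ x / h := by positivity
    simp [hu]; linarith
  have hu0 : 0 < u := lt_of_lt_of_le one_pos hu1
  set g : ℝ := Real.log u with hg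
  have hg0 : 0 ≤ g := Real.log_nonneg hu1
  -- bound g^2
  have hglr : g ≤ u ^ (k / 2) / (k / 2) := Real.log_le_rpow_div hu0.le (by positivity)
  have hv : u ^ (k / 2) * u ^ (k / 2) = u ^ k := by
    rw [← Real.rpow_add hu0]; ring_nf
  have hv0 : 0 ≤ u ^ (k / 2) := Real.rpow_nonneg hu0.le _
  have hg2 : g ^ 2 ≤ (4 / k ^ 2) * u ^ k := by
    have h1 : g * g ≤ (u ^ (k / 2) / (k / 2)) * (u ^ (k / 2) / (k / 2)) := by
      apply mul_le_mul hglr hglr hg0 (le_trans hg0 hglr)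
    calc g ^ 2 = g * g := sq g
    _ ≤ (u ^ (k / 2) / (k / 2)) * (u ^ (k / 2) / (k / 2)) := h1
    _ = (u ^ (k / 2) * u ^ (k / 2)) / (k / 2 * (k / 2)) := by ring
    _ = (4 / k ^ 2) * u ^ k := by rw [hv]; field_simp; ring
  -- bound u^k
  have huk : u ^ k ≤ 2 ^ k + (2 / h) ^ k * x ^ k := by
    rcases le_total x h with hxh | hxh
    · have h1 : u ≤ 2 := by
        have : x / h ≤ 1 := (div_le_one hh).mpr hxh
        simp [hu]; linarith
      have h2 : u ^ k ≤ 2 ^ k := Real.rpow_le_rpow hu0.le h1 hk.le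
      have h3 : 0 ≤ (2 / h) ^ k * x ^ k := by positivity
      linarith
    · have h1 : u ≤ (2 / h) * x := by
        have hx1 : (1:ℝ) ≤ x / h := (one_le_div hh).mpr hxh
        have he : (2 / h) * x = x / h + x / h := by ring
        rw [hu, he]; linarith
      have h2 : u ^ k ≤ ((2 / h) * x) ^ k := Real.rpow_le_rpow hu0.le h1 hk.le
      have h3 : ((2 / h) * x) ^ k = (2 / h) ^ k * x ^ k := Real.mul_rpow (by positivity) hx
      have h4 : (0:ℝ) ≤ 2 ^ k := by positivity
      linarith [h2, h3 ▸ h2]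
  -- L decomposition
  set L : ℝ := Real.log (x + h) with hL
  have hxhu : x + h = h * u := by rw [hu, mul_add, mul_one, mul_div_assoc', mul_div_right_comm, div_self hh.ne', one_mul]; ring
  have hLdec : L = Real.log h + g := by
    rw [hL, hxhu, Real.log_mul hh.ne' hu0.ne', hg]
  have habs : |L| ≤ |Real.log h| + g := by
    rw [hLdec]
    calc |Real.log h + g| ≤ |Real.log h| + |g| := abs_add_le _ _
    _ = |Real.log h| + g := by rw [_root_.abs_of_nonneg hg0]
  have hL2 : L ^ 2 ≤ 2 * (Real.log h) ^ 2 + 2 * g ^ 2 := by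
    nlinarith [_root_.sq_abs L, _root_.sq_abs (Real.log h), abs_nonneg L, abs_nonneg (Real.log h),
      sq_nonneg (|Real.log h| - g)]
  have hL2' : L ^ 2 ≤ E + D * x ^ k := by
    have h1 : 2 * g ^ 2 ≤ (8 / k ^ 2) * u ^ k := by
      have he : (8:ℝ) / k ^ 2 * u ^ k = 2 * (4 / k ^ 2 * u ^ k) := by ring
      rw [he]; linarith
    have h2 : (8 / k ^ 2) * u ^ k ≤ (8 / k ^ 2) * (2 ^ k + (2 / h) ^ k * x ^ k) := by
      apply mul_le_mul_of_nonneg_left huk (by positivity)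
    have he2 : E + D * x ^ k = 2 * Real.log h ^ 2 + (8 / k ^ 2) * (2 ^ k + (2 / h) ^ k * x ^ k) := by
      rw [hE, hD]; ring
    rw [he2]; linarith
  have hbl : β * L ≤ |β| * (1 + L ^ 2) / 2 := by
    have h1 : β * L ≤ |β| * |L| := by
      calc β * L ≤ |β * L| := le_abs_self _
      _ = |β| * |L| := _root_.abs_mul _ _
    have h2 : |L| ≤ (1 + L ^ 2) / 2 := by nlinarith [_root_.sq_abs L, sq_nonneg (|L| - 1), abs_nonneg L]
    calc β * L ≤ |β| * |L| := h1
    _ ≤ |β| * ((1 + L ^ 2) / 2) := mul_le_mul_of_nonneg_left h2 (abs_nonneg β)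
    _ = |β| * (1 + L ^ 2) / 2 := by ring
  -- combine
  have hrw : (x + h) ^ β = Real.exp (β * L) := by
    rw [Real.rpow_def_of_pos hy, hL, mul_comm]
  rw [hrw, ← Real.exp_add, ← Real.exp_add, Real.exp_le_exp]
  have hX : 0 ≤ x ^ k := Real.rpow_nonneg hx _
  have hdiv : L ^ 2 / c ≤ (E + D * x ^ k) / c := by gcongr
  have hbl2 : β * L ≤ |β| * (1 + (E + D * x ^ k)) / 2 := by
    have h3 := mul_le_mul_of_nonneg_left hL2' (abs_nonneg β)
    calc β * L ≤ |β| * (1 + L ^ 2) / 2 := hbl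
    _ ≤ |β| * (1 + (E + D * x ^ k)) / 2 := by
      gcongr
  have hsplit : (E + D * x ^ k) / c = E / c + D / c * x ^ k := by ring
  rw [hsplit] at hdiv
  nlinarith [mul_nonneg (abs_nonneg β) (mul_nonneg hD0 hX)]

/-- Every sequence preserving `q`-Gevrey asymptotic expansions (for some fixed
`q > 1`) also preserves summability. -/
theorem preserves_qGevrey_implies_preserves_summability
    (q : ℝ) (hq : 1 < q)
    (m : ℕ → ℝ) (hm_pos : ∀ n, 0 < m n) (hm0 : m 0 = 1)
    (h : PreservesQGevrey q m) :
    PreservesSummability m := by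
  obtain ⟨h1, h2, h3⟩ := h
  refine ⟨h1, h2, fun k hk θ hθ => ?_⟩
  obtain ⟨α, hα, U, hU, hSU, F, G, hF, hG, ⟨ε, hε, hballU, heq⟩, C, h0, hC, hh0, β, hbound⟩ :=
    h3 1 one_pos θ hθ
  have hc0 : 0 < 2 * 1 * Real.log q := by
    have := Real.log_pos hq; linarith
  obtain ⟨A, B, hA, hB, hAB⟩ := growth_bound (2 * 1 * Real.log q) h0 β k hc0 hh0 hk
  have hcb : Metric.closedBall (0 : ℂ) (ε / 2) ⊆ U := fun z hz => hballU (by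
    rw [Metric.mem_closedBall] at hz
    rw [Metric.mem_ball]
    linarith [hz])
  obtain ⟨Cf, hCf⟩ := (isCompact_closedBall (0 : ℂ) (ε / 2)).exists_bound_of_continuousOn
    (hF.continuousOn.mono hcb)
  obtain ⟨Cg, hCg⟩ := (isCompact_closedBall (0 : ℂ) (ε / 2)).exists_bound_of_continuousOn
    (hG.continuousOn.mono hcb)
  set A' : ℝ := max (C * A) (max (max Cf Cg) 1) with hA'
  have hA'1 : (1 : ℝ) ≤ A' := le_trans (le_max_right _ _) (le_max_right _ _)
  have hA'0 : 0 < A' := lt_of_lt_of_le one_pos hA'1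
  have hball2 : Metric.ball (0 : ℂ) (ε / 2) ⊆ U :=
    subset_trans Metric.ball_subset_closedBall hcb
  refine ⟨α, hα, ε / 2, by linarith, U, hU, ?_, F, G, hF, hG,
    ⟨ε, hε, fun t ht => heq t ht⟩, A', B, hA'0, hB, ?_⟩
  · rintro t (ht | ht)
    · exact hSU ht
    · exact hball2 ht
  · intro t ht
    have hexp1 : (1 : ℝ) ≤ Real.exp (B * ‖t‖ ^ k) :=
      Real.one_le_exp (by positivity)
    rcases ht with ht | ht
    · obtain ⟨hFb, hGb⟩ := hbound t ht
      have hgb := hAB ‖t‖ (norm_nonneg t)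
      have key : ∀ z : ℂ, ‖z‖ ≤
          C * Real.exp ((Real.log (‖t‖ + h0)) ^ 2 / (2 * 1 * Real.log q)) * (‖t‖ + h0) ^ β →
          ‖z‖ ≤ A' * Real.exp (B * ‖t‖ ^ k) := by
        intro z hz
        calc ‖z‖ ≤
            C * Real.exp ((Real.log (‖t‖ + h0)) ^ 2 / (2 * 1 * Real.log q)) * (‖t‖ + h0) ^ β := hz
        _ = C * (Real.exp ((Real.log (‖t‖ + h0)) ^ 2 / (2 * 1 * Real.log q)) * (‖t‖ + h0) ^ β) := by
            ring
        _ ≤ C * (A * Real.exp (B * ‖t‖ ^ k)) := mul_le_mul_of_nonneg_left hgb hC.le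
        _ = (C * A) * Real.exp (B * ‖t‖ ^ k) := by ring
        _ ≤ A' * Real.exp (B * ‖t‖ ^ k) := by
            apply mul_le_mul_of_nonneg_right (le_max_left _ _) (Real.exp_pos _).le
      exact ⟨key _ hFb, key _ hGb⟩
    · have htc : t ∈ Metric.closedBall (0 : ℂ) (ε / 2) := Metric.ball_subset_closedBall ht
      have hf := hCf t htc
      have hg := hCg t htc
      have hCfA : Cf ≤ A' := le_trans (le_max_left _ _) (le_trans (le_max_left _ _) (le_max_right _ _))
      have hCgA : Cg ≤ A' := le_trans (le_max_right _ _) (le_trans (le_max_left _ _) (le_max_right _ _))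
      constructor
      · calc ‖F t‖ = ‖F t‖ := rfl
        _ ≤ Cf := hf
        _ ≤ A' := hCfA
        _ = A' * 1 := (mul_one _).symm
        _ ≤ A' * Real.exp (B * ‖t‖ ^ k) := mul_le_mul_of_nonneg_left hexp1 hA'0.le
      · calc ‖G t‖ = ‖G t‖ := rfl
        _ ≤ Cg := hg
        _ ≤ A' := hCgA
        _ = A' * 1 := (mul_one _).symm
        _ ≤ A' * Real.exp (B * ‖t‖ ^ k) := mul_le_mul_of_nonneg_left hexp1 hA'0.le
end
end

section
/- Let w be a polynomial with complex coefficients. Then the power series Σ_{n≥0} w(n)·tⁿ converges for |t| < 1, and its sum extends to a holomorphic function G on the open set ℂ \ [1,∞). Moreover, for every θ ≢ 0 (mod 2π) the function G is bounded on the ray L_θ = {ρe^{iθ} : ρ > 0}; consequently, for every k > 0 and every θ ≢ 0 (mod 2π), G belongs to O^k on some disc-sector in direction θ. -/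
open Complex MeasureTheory

noncomputable section

section AuxLemmas
open Polynomial Finset

lemma poly_rep' : ∀ (d : ℕ) (w : Polynomial ℂ), w.natDegree ≤ d →
    ∃ a : ℕ → ℂ, ∀ n : ℕ, w.eval (n : ℂ) =
      ∑ j ∈ Finset.range (d + 1), a j * ((n + j).descFactorial j : ℂ) := by
  intro d
  induction d with
  | zero =>
    intro w hw
    refine ⟨fun _ => w.coeff 0, fun n => ?_⟩
    rw [Polynomial.eq_C_of_natDegree_le_zero hw]
    simp
  | succ d ih =>
    intro w hw
    set P : Polynomial ℂ := (ascPochhammer ℂ (d + 1)).comp (X + C 1) with hP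
    have mP : P.Monic := Monic.comp_X_add_C (monic_ascPochhammer ℂ (d + 1)) _
    have dP : P.natDegree = d + 1 := by
      simp only [hP, natDegree_comp, ascPochhammer_natDegree, mul_one, natDegree_X_add_C]
    set c := w.coeff (d + 1) with hc
    have hev : ∀ n : ℕ, P.eval (n : ℂ) = ((n + (d + 1)).descFactorial (d + 1) : ℂ) := by
      intro n
      have h1 : P.eval (n : ℂ) = (ascPochhammer ℂ (d + 1)).eval ((n + 1 : ℕ) : ℂ) := by
        simp [hP, eval_comp]
      rw [h1, ← ascPochhammer_eval_cast, ascPochhammer_nat_eq_descFactorial]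
      congr 2
      omega
    have hw' : (w - C c * P).natDegree ≤ d := by
      rw [natDegree_le_iff_coeff_eq_zero]
      intro m hm
      rcases eq_or_lt_of_le (Nat.succ_le_of_lt hm) with h | h
      · have hco : P.coeff (d + 1) = 1 := by rw [← dP]; exact mP.coeff_natDegree
        simp only [coeff_sub, coeff_C_mul, ← h, Nat.succ_eq_add_one, hco, mul_one, ← hc, sub_self]
      · simp only [coeff_sub, coeff_C_mul]
        rw [coeff_eq_zero_of_natDegree_lt (lt_of_le_of_lt hw h),
          coeff_eq_zero_of_natDegree_lt (by rw [dP]; exact h), mul_zero, sub_self]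
    obtain ⟨a', ha'⟩ := ih _ hw'
    refine ⟨fun j => if j = d + 1 then c else a' j, fun n => ?_⟩
    have := ha' n
    rw [Finset.sum_range_succ]
    have hsum : ∑ j ∈ Finset.range (d + 1),
        (if j = d + 1 then c else a' j) * ((n + j).descFactorial j : ℂ)
        = ∑ j ∈ Finset.range (d + 1), a' j * ((n + j).descFactorial j : ℂ) := by
      refine Finset.sum_congr rfl fun j hj => ?_
      rw [if_neg (by simp at hj; omega)]
    rw [hsum]
    have h2 : (fun j => if j = d + 1 then c else a' j) (d + 1) = c := by simp
    rw [h2, ← this]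
    simp only [eval_sub, eval_mul, eval_C, hev n]
    ring

lemma key_ineq' (ρ φ : ℝ) (hρ : 0 ≤ ρ) :
    (1 - Real.cos φ) / 2 ≤ ‖1 - (ρ : ℂ) * Complex.exp ((φ : ℂ) * Complex.I)‖ ^ 2 := by
  rw [Complex.sq_norm, Complex.exp_mul_I, ← Complex.ofReal_cos, ← Complex.ofReal_sin]
  have h : Complex.normSq (1 - (ρ : ℂ) * ((Real.cos φ : ℂ) + (Real.sin φ : ℂ) * Complex.I))
      = (1 - ρ * Real.cos φ) ^ 2 + (ρ * Real.sin φ) ^ 2 := by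
    simp [Complex.normSq_apply, Complex.cos_ofReal_re, Complex.sin_ofReal_re]
    ring
  rw [h]
  nlinarith [Real.sin_sq_add_cos_sq φ, Real.neg_one_le_cos φ, Real.cos_le_one φ,
    sq_nonneg (ρ - Real.cos φ), sq_nonneg ρ, sq_nonneg (ρ - 1), sq_nonneg (ρ + 1),
    mul_nonneg hρ (sub_nonneg.mpr (Real.cos_le_one φ))]

lemma hasSum_df' (j : ℕ) {t : ℂ} (ht : ‖t‖ < 1) :
    HasSum (fun n : ℕ => ((n + j).descFactorial j : ℂ) * t ^ n)
      ((j.factorial : ℂ) * (1 / (1 - t) ^ (j + 1))) := by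
  have h := (hasSum_choose_mul_geometric_of_norm_lt_one j ht).mul_left (j.factorial : ℂ)
  have e : (fun n : ℕ => ((n + j).descFactorial j : ℂ) * t ^ n) =
      fun n : ℕ => (j.factorial : ℂ) * (((n + j).choose j : ℕ) * t ^ n) := by
    funext n
    rw [Nat.descFactorial_eq_factorial_mul_choose]
    push_cast
    ring
  rw [e]; exact h

lemma cos_lip' (x y : ℝ) : |Real.cos x - Real.cos y| ≤ |x - y| := by
  rw [Real.cos_sub_cos]
  rw [abs_mul, abs_mul]
  calc |(-2 : ℝ)| * |Real.sin ((x + y) / 2)| * |Real.sin ((x - y) / 2)|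
      ≤ 2 * 1 * |(x - y) / 2| := by
        apply mul_le_mul
        · apply mul_le_mul (by norm_num) (Real.abs_sin_le_one _)
            (abs_nonneg _) (by norm_num)
        · exact Real.abs_sin_le_abs
        · exact abs_nonneg _
        · norm_num
    _ = |x - y| := by rw [abs_div]; norm_num; ring

lemma cos_lt_one_of_nzd {θ : ℝ} (hθ : NonzeroDir θ) :
    Real.cos θ < 1 := by
  rcases lt_or_eq_of_le (Real.cos_le_one θ) with h | h
  · exact h
  · exfalso
    obtain ⟨n, hn⟩ := (Real.cos_eq_one_iff θ).1 h
    exact hθ ⟨n, by linarith [hn]⟩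

end AuxLemmas

/-- For a complex polynomial `w`, the series `Σ w(n) tⁿ` converges for `|t| < 1`
and its sum extends to a holomorphic function `G` on `ℂ \ [1,∞)` which is bounded on every
ray `L_θ` with `θ ≢ 0 (mod 2π)`; consequently, for every `k > 0` and every such `θ`, `G`
belongs to `O^k` on some disc-sector in direction `θ`. -/
theorem polynomial_series_extends_bounded (w : Polynomial ℂ) :
    (∀ t : ℂ, ‖t‖ < 1 → Summable (fun n : ℕ => w.eval (n : ℂ) * t ^ n)) ∧
    ∃ G : ℂ → ℂ, DifferentiableOn ℂ G (SlitGe 1)ᶜ ∧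
      (∀ t : ℂ, ‖t‖ < 1 → G t = ∑' n : ℕ, w.eval (n : ℂ) * t ^ n) ∧
      (∀ θ : ℝ, NonzeroDir θ → ∃ M : ℝ, ∀ z ∈ Ray θ, ‖G z‖ ≤ M) ∧
      (∀ k : ℝ, 0 < k → ∀ θ : ℝ, NonzeroDir θ →
        ∃ α : ℝ, 0 < α ∧ ∃ r : ℝ, 0 < r ∧ DiscSector θ α r ⊆ (SlitGe 1)ᶜ ∧
          ∃ A B : ℝ, 0 < A ∧ 0 < B ∧ ∀ t ∈ DiscSector θ α r,
            ‖G t‖ ≤ A * Real.exp (B * ‖t‖ ^ k)) := by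
  obtain ⟨a, ha⟩ := poly_rep' w.natDegree w le_rfl
  set D := w.natDegree + 1 with hD
  set G : ℂ → ℂ :=
    fun t => ∑ j ∈ Finset.range D, a j * ((j.factorial : ℂ) * (1 / (1 - t) ^ (j + 1))) with hGdef
  have hsum : ∀ t : ℂ, ‖t‖ < 1 → HasSum (fun n : ℕ => w.eval (n : ℂ) * t ^ n) (G t) := by
    intro t ht
    have h := hasSum_sum (s := Finset.range D)
      (f := fun j n => a j * (((n + j).descFactorial j : ℂ) * t ^ n))
      (a := fun j => a j * ((j.factorial : ℂ) * (1 / (1 - t) ^ (j + 1))))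
      (fun j _ => (hasSum_df' j ht).mul_left (a j))
    convert h using 1
    funext n
    rw [ha n, Finset.sum_mul]
    exact Finset.sum_congr rfl fun j _ => by ring
  have hMnn : ∀ δ : ℝ, 0 < δ →
      0 ≤ ∑ j ∈ Finset.range D, ‖a j‖ * ((j.factorial : ℝ) * (1 / δ ^ (j + 1))) := by
    intro δ hδ
    apply Finset.sum_nonneg
    intro j _
    positivity
  have hbound : ∀ δ : ℝ, 0 < δ → ∀ t : ℂ, δ ≤ ‖1 - t‖ →
      ‖G t‖ ≤
        ∑ j ∈ Finset.range D, ‖a j‖ * ((j.factorial : ℝ) * (1 / δ ^ (j + 1))) := by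
    intro δ hδ t htd
    refine le_trans (norm_sum_le _ _) (Finset.sum_le_sum fun j _ => ?_)
    rw [norm_mul, norm_mul, norm_div, norm_pow, norm_one, Complex.norm_natCast]
    gcongr
  refine ⟨fun t ht => (hsum t ht).summable, G, ?_, fun t ht => ((hsum t ht).tsum_eq).symm, ?_, ?_⟩
  · -- differentiability
    apply DifferentiableOn.fun_sum
    intro j _
    have hne : ∀ t ∈ (SlitGe 1)ᶜ, (1 - t) ^ (j + 1) ≠ 0 := by
      intro t ht
      apply pow_ne_zero
      rw [sub_ne_zero]
      intro h
      exact ht ⟨by rw [← h]; simp, by rw [← h]; simp⟩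
    exact (((differentiableOn_const _).div
      (((differentiableOn_const (1 : ℂ)).sub differentiableOn_id).pow _) hne).const_mul
        _).const_mul _
  · -- ray bound
    intro θ hθ
    have hc : Real.cos θ < 1 := cos_lt_one_of_nzd hθ
    set δr := Real.sqrt ((1 - Real.cos θ) / 2) with hδrdef
    have hδr : 0 < δr := Real.sqrt_pos.2 (by linarith)
    refine ⟨∑ j ∈ Finset.range D, ‖a j‖ * ((j.factorial : ℝ) * (1 / δr ^ (j + 1))), ?_⟩
    rintro z ⟨ρ, hρ, rfl⟩
    apply hbound δr hδr
    have hk := key_ineq' ρ θ hρ.le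
    calc δr = Real.sqrt ((1 - Real.cos θ) / 2) := rfl
      _ ≤ Real.sqrt (‖1 - (ρ : ℂ) * Complex.exp ((θ : ℂ) * Complex.I)‖ ^ 2) :=
          Real.sqrt_le_sqrt hk
      _ = _ := Real.sqrt_sq (norm_nonneg _)
  · -- growth on disc-sector
    intro k hk θ hθ
    have hc : Real.cos θ < 1 := cos_lt_one_of_nzd hθ
    set c₀ := 1 - Real.cos θ with hc₀def
    have hc₀ : 0 < c₀ := by simp only [hc₀def]; linarith
    have hφbound : ∀ φ : ℝ, |φ - θ| < c₀ / 2 →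
        Real.cos φ < 1 ∧ c₀ / 4 ≤ (1 - Real.cos φ) / 2 := by
      intro φ hφ
      have h1 := cos_lip' φ θ
      have h2 : Real.cos φ - Real.cos θ ≤ |φ - θ| := le_trans (le_abs_self _) h1
      constructor
      · simp only [hc₀def] at hφ; linarith
      · simp only [hc₀def] at hφ ⊢; linarith
    refine ⟨c₀, hc₀, 1/2, by norm_num, ?_, ?_⟩
    · -- inclusion
      rintro t (⟨ρ, φ, hρ, hφ, rfl⟩ | htb)
      · intro hts
        obtain ⟨h1cos, _⟩ := hφbound φ hφ
        obtain ⟨him, hre⟩ := hts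
        have him' : ρ * Real.sin φ = 0 := by
          simpa [Complex.mul_im, Complex.exp_ofReal_mul_I_re, Complex.exp_ofReal_mul_I_im]
            using him
        have hre' : (1 : ℝ) ≤ ρ * Real.cos φ := by
          simpa [Complex.mul_re, Complex.exp_ofReal_mul_I_re, Complex.exp_ofReal_mul_I_im]
            using hre
        have hs : Real.sin φ = 0 := by
          rcases mul_eq_zero.1 him' with h | h
          · exact absurd h hρ.ne'
          · exact h
        nlinarith [Real.sin_sq_add_cos_sq φ, mul_pos hρ hρ, sq_nonneg (Real.cos φ + 1)]
      · intro hts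
        obtain ⟨_, hre⟩ := hts
        have h1 := Complex.re_le_norm t
        have h2 : ‖t‖ < 1/2 := by
          simpa [Metric.mem_ball, Complex.dist_eq] using htb
        linarith
    · -- bound
      set δ := min (Real.sqrt (c₀ / 4)) (1/2 : ℝ) with hδdef
      have hδ : 0 < δ := lt_min (Real.sqrt_pos.2 (by linarith)) (by norm_num)
      refine ⟨(∑ j ∈ Finset.range D,
          ‖a j‖ * ((j.factorial : ℝ) * (1 / δ ^ (j + 1)))) + 1, 1,
          by linarith [hMnn δ hδ], one_pos, ?_⟩
      intro t htds
      have hlow : δ ≤ ‖1 - t‖ := by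
        rcases htds with ⟨ρ, φ, hρ, hφ, rfl⟩ | htb
        · have h2 := (hφbound φ hφ).2
          have hk2 := key_ineq' ρ φ hρ.le
          calc δ ≤ Real.sqrt (c₀ / 4) := min_le_left _ _
            _ ≤ Real.sqrt ((1 - Real.cos φ) / 2) := Real.sqrt_le_sqrt h2
            _ ≤ Real.sqrt (‖1 - (ρ : ℂ) * Complex.exp ((φ : ℂ) * Complex.I)‖ ^ 2) :=
                Real.sqrt_le_sqrt hk2
            _ = _ := Real.sqrt_sq (norm_nonneg _)
        · have htb' : ‖t‖ < 1/2 := by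
            simpa [Metric.mem_ball, Complex.dist_eq] using htb
          have h3 : (1 : ℝ) - ‖t‖ ≤ ‖1 - t‖ := by
            have := norm_sub_norm_le (1 : ℂ) t
            simpa using this
          calc δ ≤ 1/2 := min_le_right _ _
            _ ≤ _ := by linarith
      have hG := hbound δ hδ t hlow
      have hexp : 1 ≤ Real.exp (1 * ‖t‖ ^ k) := Real.one_le_exp (by positivity)
      calc ‖G t‖
          ≤ ∑ j ∈ Finset.range D,
              ‖a j‖ * ((j.factorial : ℝ) * (1 / δ ^ (j + 1))) := hG
        _ ≤ (∑ j ∈ Finset.range D,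
              ‖a j‖ * ((j.factorial : ℝ) * (1 / δ ^ (j + 1)))) + 1 := by linarith
        _ ≤ ((∑ j ∈ Finset.range D,
              ‖a j‖ * ((j.factorial : ℝ) * (1 / δ ^ (j + 1)))) + 1) *
                Real.exp (1 * ‖t‖ ^ k) :=
            le_mul_of_one_le_right (by linarith [hMnn δ hδ]) hexp
end
end

section
/- Let a, s ∈ ℂ with Re(a) > 0. If either |t| < 1 and Re(s) > 0, or t = 1 and Re(s) > 1, then Σ_{n≥0} tⁿ/(n+a)^s = (1/Γ(s)) · ∫₀^∞ ζ^{s−1}·e^{−aζ}/(1 − t·e^{−ζ}) dζ, where the left-hand series converges, the integral converges absolutely, (n+a)^s and ζ^{s−1} are principal-branch complex powers, and Γ is the complex Gamma function. -/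
open Complex MeasureTheory

noncomputable section

open Set Real Filter
open scoped NNReal ENNReal

lemma myReal_integrable {σ r : ℝ} (hσ : 0 < σ) (hr : 0 < r) :
    IntegrableOn (fun t : ℝ => t ^ (σ - 1) * Real.exp (-(r * t))) (Ioi 0) := by
  have h0 := Real.GammaIntegral_convergent hσ
  have h1 : IntegrableOn (fun t : ℝ => Real.exp (-(r*t)) * (r*t) ^ (σ - 1)) (Ioi 0) := by
    have := (integrableOn_Ioi_comp_mul_left_iff
      (fun x : ℝ => Real.exp (-x) * x ^ (σ - 1)) 0 hr).mpr (by simpa using h0)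
    simpa using this
  refine IntegrableOn.congr_fun (h1.const_mul ((r : ℝ) ^ (σ - 1))⁻¹)
    (fun t ht => ?_) measurableSet_Ioi
  have ht : (0:ℝ) < t := ht
  rw [Real.mul_rpow hr.le ht.le]
  field_simp [(Real.rpow_pos_of_pos hr _).ne']

lemma norm_integrand {s b : ℂ} {t : ℝ} (ht : 0 < t) :
    ‖(t:ℂ) ^ (s - 1) * Complex.exp (-b * t)‖
      = t ^ (s.re - 1) * Real.exp (-(b.re * t)) := by
  rw [norm_mul,
    Complex.norm_cpow_eq_rpow_re_of_pos ht, Complex.norm_exp, sub_re, one_re]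
  congr 2
  simp [Complex.mul_re]

lemma cont_integrand (s b : ℂ) :
    ContinuousOn (fun t : ℝ => (t:ℂ) ^ (s - 1) * Complex.exp (-b * t)) (Ioi 0) := by
  apply ContinuousOn.mul
  · apply continuousOn_of_forall_continuousAt
    intro x hx
    exact (continuousAt_cpow_const <| Complex.ofReal_mem_slitPlane.2 hx).comp
      Complex.continuous_ofReal.continuousAt
  · exact (Complex.continuous_exp.comp (continuous_const.mul Complex.continuous_ofReal)).continuousOn

lemma myCplx_integrable {s b : ℂ} (hs : 0 < s.re) (hb : 0 < b.re) :
    IntegrableOn (fun t : ℝ => (t:ℂ) ^ (s - 1) * Complex.exp (-b * t)) (Ioi 0) := by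
  refine Integrable.mono' (myReal_integrable hs hb)
    ((cont_integrand s b).aestronglyMeasurable measurableSet_Ioi) ?_
  refine (ae_restrict_iff' measurableSet_Ioi).mpr ?_
  filter_upwards with t ht
  rw [norm_integrand ht]


/-- differentiability in `b` of the parametric integral -/
lemma myDiff {s : ℂ} (hs : 0 < s.re) {b₀ : ℂ} (hb₀ : 0 < b₀.re) :
    DifferentiableAt ℂ
      (fun b : ℂ => ∫ t in Ioi (0:ℝ), (t:ℂ) ^ (s - 1) * Complex.exp (-b * t)) b₀ := by
  set ε : ℝ := b₀.re / 2 with hε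
  have hε0 : 0 < ε := by positivity
  have key := hasDerivAt_integral_of_dominated_loc_of_deriv_le (hs := Metric.ball_mem_nhds b₀ hε0)
    (F := fun (b : ℂ) (t : ℝ) => (t:ℂ) ^ (s - 1) * Complex.exp (-b * t))
    (F' := fun (b : ℂ) (t : ℝ) => (t:ℂ) ^ (s - 1) * (Complex.exp (-b * t) * (-t)))
    (μ := volume.restrict (Ioi 0)) (x₀ := b₀)
    (bound := fun t : ℝ => t ^ (s.re + 1 - 1) * Real.exp (-(ε * t)))
    ?_ ?_ ?_ ?_ ?_ ?_
  · exact key.2.differentiableAt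
  · filter_upwards with b
    exact ((cont_integrand s b).aestronglyMeasurable measurableSet_Ioi)
  · exact myCplx_integrable hs hb₀
  · apply ContinuousOn.aestronglyMeasurable ?_ measurableSet_Ioi
    exact (((cont_integrand s b₀).mul Complex.continuous_ofReal.neg.continuousOn).congr
      (fun t _ => by show _ = (t:ℂ) ^ (s - 1) * Complex.exp (-b₀ * t) * -(t:ℂ); ring))
  · refine (ae_restrict_iff' measurableSet_Ioi).mpr ?_
    filter_upwards with t ht
    intro x hx
    have hxre : ε ≤ x.re := by
      have h1 : |(x - b₀).re| ≤ ‖x - b₀‖ := Complex.abs_re_le_norm _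
      have h2 : ‖x - b₀‖ < ε := by simpa [Metric.mem_ball, dist_eq_norm] using hx
      have := abs_le.mp (h1.trans h2.le)
      simp only [Complex.sub_re] at this
      linarith [this.1]
    have ht0 : (0:ℝ) < t := ht
    rw [norm_mul, norm_mul,
      Complex.norm_cpow_eq_rpow_re_of_pos ht0, sub_re, one_re]
    have hnorm_exp : ‖Complex.exp (-x * t)‖ = Real.exp (-(x.re * t)) := by
      rw [Complex.norm_exp]
      congr 1
      simp [Complex.mul_re]
    rw [hnorm_exp]
    have h3 : Real.exp (-(x.re * t)) ≤ Real.exp (-(ε * t)) := by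
      apply Real.exp_le_exp.mpr
      nlinarith
    have h4 : ‖(-t : ℂ)‖ = t := by
      simp [abs_of_pos ht0]
    rw [h4]
    have h5 : t ^ (s.re + 1 - 1) = t ^ (s.re - 1) * t := by
      rw [show s.re + 1 - 1 = (s.re - 1) + 1 by ring, Real.rpow_add_one ht0.ne']
    rw [h5]
    calc t ^ (s.re - 1) * (Real.exp (-(x.re * t)) * t)
        ≤ t ^ (s.re - 1) * (Real.exp (-(ε * t)) * t) := by
          apply mul_le_mul_of_nonneg_left _ (Real.rpow_nonneg ht0.le _)
          exact mul_le_mul_of_nonneg_right h3 ht0.le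
      _ = t ^ (s.re - 1) * t * Real.exp (-(ε * t)) := by ring
  · exact myReal_integrable (by linarith) hε0
  · refine (ae_restrict_iff' measurableSet_Ioi).mpr ?_
    filter_upwards with t ht
    intro x hx
    have hd : HasDerivAt (fun b : ℂ => Complex.exp (-b * t)) (Complex.exp (-x * t) * (-t)) x := by
      have h1 : HasDerivAt (fun b : ℂ => b * (-(t:ℂ))) (-(t:ℂ)) x := hasDerivAt_mul_const _
      have h2 := h1.cexp
      have heq : (fun b : ℂ => Complex.exp (b * (-(t:ℂ)))) = fun b : ℂ => Complex.exp (-b * t) := by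
        funext b; ring_nf
      rw [heq] at h2
      convert h2 using 1
      rfl
      ring_nf
    exact hd.const_mul _

/-- The Gamma integral with complex scaling. -/
lemma myGamma_int {s : ℂ} (hs : 0 < s.re) {b : ℂ} (hb : 0 < b.re) :
    ∫ t in Ioi (0:ℝ), (t:ℂ) ^ (s - 1) * Complex.exp (-b * t)
      = (1 / b) ^ s * Complex.Gamma s := by
  set U : Set ℂ := {z : ℂ | 0 < z.re} with hU
  have hUo : IsOpen U := isOpen_lt continuous_const Complex.continuous_re
  have hUc : Convex ℝ U := convex_halfSpace_re_gt 0
  set f : ℂ → ℂ := fun b => ∫ t in Ioi (0:ℝ), (t:ℂ) ^ (s - 1) * Complex.exp (-b * t) with hf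
  set g : ℂ → ℂ := fun b => (1 / b) ^ s * Complex.Gamma s with hg
  have hfa : AnalyticOnNhd ℂ f U :=
    DifferentiableOn.analyticOnNhd
      (fun b hb => (myDiff hs hb).differentiableWithinAt) hUo
  have hga : AnalyticOnNhd ℂ g U := by
    refine DifferentiableOn.analyticOnNhd (fun z hz => DifferentiableAt.differentiableWithinAt ?_) hUo
    have hzre : 0 < z.re := hz
    have hz0 : z ≠ 0 := by
      intro h; rw [h] at hzre; simp at hzre
    have h1z : (1/z : ℂ) ∈ Complex.slitPlane := by
      rw [Complex.mem_slitPlane_iff]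
      left
      rw [one_div, Complex.inv_re]
      have hns := Complex.normSq_pos.mpr hz0
      positivity
    have hd : HasDerivAt (fun z : ℂ => 1/z) (-(z^2)⁻¹) z := by
      simpa [one_div] using hasDerivAt_inv hz0
    exact ((hd.cpow_const h1z).differentiableAt).mul_const _
  have heq_real : ∀ r : ℝ, 0 < r → f (r:ℂ) = g (r:ℂ) := by
    intro r hr
    have := integral_cpow_mul_exp_neg_mul_Ioi hs hr
    rw [hf, hg]
    simp only
    rw [← this]
    apply setIntegral_congr_fun measurableSet_Ioi
    intro t ht
    simp [neg_mul]
  have h1U : (1:ℂ) ∈ U := by simp [hU]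
  have hbU : b ∈ U := hb
  have hfreq : ∃ᶠ z in nhdsWithin (1:ℂ) {(1:ℂ)}ᶜ, f z = g z := by
    have htend : Tendsto (fun n : ℕ => (1 + ((n:ℝ)+1)⁻¹ : ℂ)) atTop (nhdsWithin 1 {(1:ℂ)}ᶜ) := by
      apply tendsto_nhdsWithin_of_tendsto_nhds_of_eventually_within
      · have : Tendsto (fun n : ℕ => ((n:ℝ)+1)⁻¹) atTop (nhds 0) :=
          tendsto_one_div_add_atTop_nhds_zero_nat.congr (by intro n; simp [one_div])
        have := ((Complex.continuous_ofReal.tendsto 0).comp this).const_add (1:ℂ)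
        simpa using this
      · filter_upwards with n
        simp only [mem_compl_iff, mem_singleton_iff]
        intro h
        have hx : ((((n:ℝ)+1)⁻¹ : ℝ) : ℂ) = 0 := by
          have := add_eq_left.mp h
          exact_mod_cast this
        rw [Complex.ofReal_eq_zero, inv_eq_zero] at hx
        have : (0:ℝ) < (n:ℝ) + 1 := by positivity
        exact this.ne' hx
    apply htend.frequently
    apply Frequently.of_forall
    intro n
    have hpos : (0:ℝ) < 1 + ((n:ℝ)+1)⁻¹ := by positivity
    have := heq_real _ hpos
    simpa using this
  exact hfa.eqOn_of_preconnected_of_frequently_eq hga hUc.isPreconnected h1U hfreq hbU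


/-- Integral representation of the Hurwitz–Lerch transcendent: for `Re a > 0`
and either `|t| < 1, Re s > 0` or `t = 1, Re s > 1`,
`Σ_{n≥0} tⁿ/(n+a)^s = Γ(s)⁻¹ ∫₀^∞ ζ^{s-1} e^{-aζ}/(1 - t e^{-ζ}) dζ`. -/
theorem hurwitz_lerch_integral_representation (a s t : ℂ) (ha : 0 < a.re)
    (h : (‖t‖ < 1 ∧ 0 < s.re) ∨ (t = 1 ∧ 1 < s.re)) :
    Summable (fun n : ℕ => t ^ n / ((n : ℂ) + a) ^ s) ∧
    MeasureTheory.IntegrableOn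
      (fun ζ : ℝ =>
        (ζ : ℂ) ^ (s - 1) * Complex.exp (-a * (ζ : ℂ)) / (1 - t * Complex.exp (-(ζ : ℂ))))
      (Set.Ioi 0) ∧
    ∑' n : ℕ, t ^ n / ((n : ℂ) + a) ^ s =
      (Complex.Gamma s)⁻¹ *
        ∫ ζ in Set.Ioi (0 : ℝ),
          (ζ : ℂ) ^ (s - 1) * Complex.exp (-a * (ζ : ℂ)) / (1 - t * Complex.exp (-(ζ : ℂ))) := by
  have ht1 : ‖t‖ ≤ 1 := by
    rcases h with ⟨h1, _⟩ | ⟨h1, _⟩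
    · exact h1.le
    · simp [h1]
  have hs : 0 < s.re := by
    rcases h with ⟨_, h2⟩ | ⟨_, h2⟩
    · exact h2
    · linarith
  set σ := s.re with hσdef
  set α := a.re with hαdef
  set F : ℝ → ℂ := fun ζ =>
    (ζ : ℂ) ^ (s - 1) * Complex.exp (-a * (ζ : ℂ)) / (1 - t * Complex.exp (-(ζ : ℂ))) with hFdef
  set f : ℕ → ℝ → ℂ :=
    fun n ζ => t ^ n * ((ζ:ℂ) ^ (s - 1) * Complex.exp (-((n:ℂ) + a) * ζ)) with hfdef
  have hre : ∀ n : ℕ, 0 < ((n:ℂ) + a).re := by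
    intro n
    simp only [Complex.add_re, Complex.natCast_re]
    positivity
  have hrre : ∀ n : ℕ, ((n:ℂ) + a).re = (n:ℝ) + α := by
    intro n; simp [hαdef]
  -- denominator nonzero
  have hden : ∀ ζ : ℝ, 0 < ζ → ‖t * Complex.exp (-(ζ:ℂ))‖ < 1 := by
    intro ζ hζ
    rw [norm_mul]
    have he : ‖Complex.exp (-(ζ:ℂ))‖ = Real.exp (-ζ) := by
      rw [Complex.norm_exp]
      simp
    rw [he]
    have h1 : Real.exp (-ζ) < 1 := Real.exp_lt_one_iff.mpr (by linarith)
    calc ‖t‖ * Real.exp (-ζ) ≤ 1 * Real.exp (-ζ) :=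
          mul_le_mul_of_nonneg_right ht1 (Real.exp_pos _).le
      _ < 1 := by simpa using h1
  have hden' : ∀ ζ : ℝ, 0 < ζ → (1 : ℂ) - t * Complex.exp (-(ζ:ℂ)) ≠ 0 := by
    intro ζ hζ h0
    have h1 : t * Complex.exp (-(ζ:ℂ)) = 1 := by linear_combination -h0
    have h2 := hden ζ hζ
    rw [h1, norm_one] at h2
    exact lt_irrefl 1 h2
  -- factorization of f
  have hfe : ∀ ζ : ℝ, 0 < ζ → ∀ n : ℕ,
      f n ζ = ((ζ:ℂ) ^ (s - 1) * Complex.exp (-a * ζ)) * (t * Complex.exp (-(ζ:ℂ))) ^ n := by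
    intro ζ hζ n
    rw [hfdef]
    simp only
    rw [mul_pow, ← Complex.exp_nat_mul,
      show -((n:ℂ) + a) * ζ = -a * ζ + (n:ℂ) * (-(ζ:ℂ)) by ring, Complex.exp_add]
    ring
  -- pointwise sums
  have hpt : ∀ ζ : ℝ, ζ ∈ Ioi (0:ℝ) → HasSum (fun n => f n ζ) (F ζ) := by
    intro ζ hζ
    have hgeo := (hasSum_geometric_of_norm_lt_one (hden ζ hζ)).mul_left
      ((ζ:ℂ) ^ (s - 1) * Complex.exp (-a * ζ))
    rw [hFdef]
    simp only [div_eq_mul_inv]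
    have := hgeo
    rw [show (fun n : ℕ => ((ζ:ℂ) ^ (s - 1) * Complex.exp (-a * ζ)) *
        (t * Complex.exp (-(ζ:ℂ))) ^ n) = fun n => f n ζ from
      funext fun n => (hfe ζ hζ n).symm] at this
    exact this
  have hnormsum : ∀ ζ : ℝ, ζ ∈ Ioi (0:ℝ) → Summable (fun n => ‖f n ζ‖) := by
    intro ζ hζ
    have hgeo : Summable (fun n : ℕ => ‖(t * Complex.exp (-(ζ:ℂ))) ^ n‖) := by
      simp only [norm_pow]
      exact summable_geometric_of_lt_one (norm_nonneg _) (hden ζ hζ)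
    refine (hgeo.mul_left ‖(ζ:ℂ) ^ (s - 1) * Complex.exp (-a * (ζ:ℂ))‖).congr (fun n => ?_)
    rw [← norm_mul, ← hfe ζ hζ n]
  -- norms of terms
  have hnorm : ∀ ζ : ℝ, ζ ∈ Ioi (0:ℝ) → ∀ n : ℕ,
      ‖f n ζ‖ = ‖t‖ ^ n * (ζ ^ (σ - 1) * Real.exp (-(((n:ℝ) + α) * ζ))) := by
    intro ζ hζ n
    rw [hfdef]
    simp only
    rw [norm_mul, norm_pow, norm_integrand (show (0:ℝ) < ζ from hζ), hrre n]
  -- integrability of terms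
  have hint : ∀ n : ℕ, IntegrableOn (f n) (Ioi 0) := by
    intro n
    exact (myCplx_integrable hs (hre n)).const_mul _
  -- integral values
  have hval : ∀ n : ℕ, ∫ ζ in Ioi (0:ℝ), f n ζ
      = Complex.Gamma s * (t ^ n / ((n:ℂ) + a) ^ s) := by
    intro n
    rw [hfdef]
    simp only
    rw [integral_const_mul, myGamma_int hs (hre n)]
    have harg : ((n:ℂ) + a).arg ≠ Real.pi :=
      Complex.slitPlane_arg_ne_pi (Complex.mem_slitPlane_iff.mpr (Or.inl (hre n)))
    rw [one_div, inv_cpow _ _ harg, div_eq_mul_inv]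
    ring
  -- integrals of norms
  have hα : 0 < α := ha
  have hnormval : ∀ n : ℕ, ∫ ζ in Ioi (0:ℝ), ‖f n ζ‖
      = ‖t‖ ^ n * ((1/((n:ℝ) + α)) ^ σ * Real.Gamma σ) := by
    intro n
    have hna : 0 < (n:ℝ) + α := by positivity
    rw [← Real.integral_rpow_mul_exp_neg_mul_Ioi hs hna, ← integral_const_mul]
    exact setIntegral_congr_fun measurableSet_Ioi (fun ζ hζ => hnorm ζ hζ n)
  -- summability of norm integrals
  have hintsum : Summable (fun n : ℕ => ∫ ζ in Ioi (0:ℝ), ‖f n ζ‖) := by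
    rw [funext hnormval]
    rcases h with ⟨htlt, _⟩ | ⟨hteq, hσ1⟩
    · refine Summable.of_nonneg_of_le (fun n => by positivity) (fun n => ?_)
        ((summable_geometric_of_lt_one (norm_nonneg t) htlt).mul_right
          ((1/α) ^ σ * Real.Gamma σ))
      apply mul_le_mul_of_nonneg_left _ (pow_nonneg (norm_nonneg t) n)
      apply mul_le_mul_of_nonneg_right _ (Real.Gamma_pos_of_pos hs).le
      apply Real.rpow_le_rpow (by positivity) _ hs.le
      apply one_div_le_one_div_of_le hα
      simp only [le_add_iff_nonneg_left]
      positivity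
    · have hbase : Summable (fun n : ℕ => 1/((n:ℝ)) ^ σ) :=
        Real.summable_one_div_nat_rpow.mpr hσ1
      have hbase1 : Summable (fun n : ℕ => (1/((n:ℝ) + 1)) ^ σ) := by
        have h4 := (summable_nat_add_iff 1).mpr hbase
        refine h4.congr (fun n => ?_)
        push_cast
        rw [one_div, one_div, Real.inv_rpow (by positivity)]
      set m : ℝ := min α 1 with hm
      have hm0 : 0 < m := lt_min hα one_pos
      refine Summable.of_nonneg_of_le (fun n => by positivity) (fun n => ?_)
        ((hbase1.mul_left ((1/m) ^ σ)).mul_right (Real.Gamma σ))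
      rw [hteq]
      simp only [norm_one, one_pow, one_mul]
      apply mul_le_mul_of_nonneg_right _ (Real.Gamma_pos_of_pos hs).le
      have hle : m * ((n:ℝ) + 1) ≤ (n:ℝ) + α := by
        have h1 : m ≤ 1 := min_le_right _ _
        have h2 : m ≤ α := min_le_left _ _
        nlinarith [Nat.cast_nonneg (α := ℝ) n]
      have h3 : (1:ℝ)/((n:ℝ) + α) ≤ 1/(m * ((n:ℝ) + 1)) :=
        one_div_le_one_div_of_le (by positivity) hle
      calc (1/((n:ℝ) + α)) ^ σ ≤ (1/(m * ((n:ℝ) + 1))) ^ σ :=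
            Real.rpow_le_rpow (by positivity) h3 hs.le
        _ = (1/m) ^ σ * (1/((n:ℝ) + 1)) ^ σ := by
            rw [← Real.mul_rpow (by positivity) (by positivity), div_mul_div_comm, one_mul]
  -- main interchange
  have key := hasSum_integral_of_summable_integral_norm hint hintsum
  have hFeq : ∫ ζ in Ioi (0:ℝ), (∑' n : ℕ, f n ζ) = ∫ ζ in Ioi (0:ℝ), F ζ :=
    setIntegral_congr_fun measurableSet_Ioi (fun ζ hζ => (hpt ζ hζ).tsum_eq)
  have hΓ : Complex.Gamma s ≠ 0 := by
    apply Complex.Gamma_ne_zero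
    intro mm hsm
    have hs' : 0 < s.re := hs
    rw [hsm] at hs'
    simp only [Complex.neg_re, Complex.natCast_re] at hs'
    have hnn : (0:ℝ) ≤ (mm:ℝ) := Nat.cast_nonneg mm
    linarith
  have hsum2 : Summable (fun n : ℕ => Complex.Gamma s * (t ^ n / ((n:ℂ) + a) ^ s)) := by
    have := key.summable
    rwa [funext hval] at this
  have hsummLHS : Summable (fun n : ℕ => t ^ n / ((n:ℂ) + a) ^ s) := by
    refine (hsum2.mul_left (Complex.Gamma s)⁻¹).congr (fun n => ?_)
    rw [← mul_assoc, inv_mul_cancel₀ hΓ, one_mul]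
  -- integrability of F
  have hFcont : ContinuousOn F (Ioi 0) := by
    apply ContinuousOn.div (cont_integrand s a)
    · exact (continuous_const.sub (continuous_const.mul
        (Complex.continuous_exp.comp Complex.continuous_ofReal.neg))).continuousOn
    · exact fun ζ hζ => hden' ζ hζ
  have hASM : AEStronglyMeasurable F (volume.restrict (Ioi 0)) :=
    hFcont.aestronglyMeasurable measurableSet_Ioi
  have hHFI : HasFiniteIntegral F (volume.restrict (Ioi 0)) := by
    rw [hasFiniteIntegral_iff_norm]
    have step1 : ∫⁻ ζ in Ioi (0:ℝ), ENNReal.ofReal ‖F ζ‖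
        ≤ ∫⁻ ζ in Ioi (0:ℝ), ∑' n : ℕ, ENNReal.ofReal ‖f n ζ‖ := by
      apply lintegral_mono_ae
      refine (ae_restrict_iff' measurableSet_Ioi).mpr ?_
      filter_upwards with ζ hζ
      have hsumn := hnormsum ζ hζ
      have hle : ‖F ζ‖ ≤ ∑' n, ‖f n ζ‖ := by
        rw [← (hpt ζ hζ).tsum_eq]
        exact norm_tsum_le_tsum_norm hsumn
      calc ENNReal.ofReal ‖F ζ‖ ≤ ENNReal.ofReal (∑' n, ‖f n ζ‖) :=
            ENNReal.ofReal_le_ofReal hle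
        _ = ∑' n, ENNReal.ofReal ‖f n ζ‖ :=
            ENNReal.ofReal_tsum_of_nonneg (fun n => norm_nonneg _) hsumn
    have step2 : ∫⁻ ζ in Ioi (0:ℝ), ∑' n : ℕ, ENNReal.ofReal ‖f n ζ‖
        = ∑' n : ℕ, ∫⁻ ζ in Ioi (0:ℝ), ENNReal.ofReal ‖f n ζ‖ := by
      have : ∀ n : ℕ, ∀ ζ : ℝ, ENNReal.ofReal ‖f n ζ‖ = (‖f n ζ‖₊ : ℝ≥0∞) := by
        intro n ζ
        rw [ofReal_norm, enorm_eq_nnnorm]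
      simp only [this]
      exact lintegral_tsum (fun n => (hint n).1.enorm)
    have step3 : ∀ n : ℕ, ∫⁻ ζ in Ioi (0:ℝ), ENNReal.ofReal ‖f n ζ‖
        = ENNReal.ofReal (∫ ζ in Ioi (0:ℝ), ‖f n ζ‖) := by
      intro n
      rw [ofReal_integral_norm_eq_lintegral_enorm (hint n)]
      simp_rw [ofReal_norm]
    calc ∫⁻ ζ in Ioi (0:ℝ), ENNReal.ofReal ‖F ζ‖
        ≤ ∑' n : ℕ, ∫⁻ ζ in Ioi (0:ℝ), ENNReal.ofReal ‖f n ζ‖ := step1.trans_eq step2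
      _ = ∑' n : ℕ, ENNReal.ofReal (∫ ζ in Ioi (0:ℝ), ‖f n ζ‖) := by
          exact tsum_congr step3
      _ = ENNReal.ofReal (∑' n : ℕ, ∫ ζ in Ioi (0:ℝ), ‖f n ζ‖) :=
          (ENNReal.ofReal_tsum_of_nonneg
            (fun n => integral_nonneg (fun _ => norm_nonneg _)) hintsum).symm
      _ < ⊤ := ENNReal.ofReal_lt_top
  have hFint : IntegrableOn F (Ioi 0) := ⟨hASM, hHFI⟩
  -- final equality
  have hts : Complex.Gamma s * (∑' n : ℕ, t ^ n / ((n:ℂ) + a) ^ s)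
      = ∫ ζ in Ioi (0:ℝ), F ζ := by
    rw [← tsum_mul_left, ← funext hval, key.tsum_eq, hFeq]
  refine ⟨hsummLHS, hFint, ?_⟩
  rw [← hts, ← mul_assoc, inv_mul_cancel₀ hΓ, one_mul]


end
end
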